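/- arXiv:1910.05278 — 9 statements merged into one kernel-verified Lean document; each statement's English description precedes it below -/
import Mathlib

section
/- Let k be a field of characteristic zero and let D = a·∂x + b·∂y be a k-derivation of k[x,y]. Let d be a positive integer with total degree of a and of b both at most d. If there exist N ≥ 2 + d(d+1)/2 irreducible polynomials f₁,…,f_N in k[x,y], pairwise non-proportional, each of which is an eigenvector of D (i.e. D(f_i) = λ_i·f_i for some λ_i ∈ k[x,y]), then D admits a rational first integral: there exist f, g ∈ k[x,y] with g ≠ 0, f not a k-scalar multiple of g, and D(f)·g = f·D(g). -/
/-!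
Every eigenvector `fᵢ` has a cofactor `λᵢ` of degree `< d`, and these lie in a space of
dimension `d(d+1)/2`, so there are two linearly independent relations `∑ cᵢ λᵢ = 0 = ∑ c'ᵢ λᵢ`.
For such a relation the closed logarithmic form `ω_c = ∑ cᵢ dfᵢ/fᵢ` satisfies
`ω_c(D) = ∑ cᵢ λᵢ = 0`, and it is nonzero because `ω_c` has residue `cᵢ` along the irreducible
curve `fᵢ = 0`. Two forms annihilated by the same nonzero `D` are proportional, `ω_{c'} = h ω_c`,
and `0 = dω_{c'} = dh ∧ ω_c` shows that `dh` is annihilated by `D` as well, so `h` is a rational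
first integral; it is not constant because `c` and `c'` are independent.
-/

open MvPolynomial Finset

section LinearAlgebra

variable {K M ι : Type*} [Field K] [AddCommGroup M] [Module K M] [Fintype ι]

theorem exists_linearIndependent_pair_of_linearCombination_eq_zero
    (W : Submodule K M) [FiniteDimensional K W] {v : ι → M} (hv : ∀ i, v i ∈ W)
    (hcard : Module.finrank K W + 2 ≤ Fintype.card ι) :
    ∃ c c' : ι → K, Fintype.linearCombination K v c = 0 ∧
      Fintype.linearCombination K v c' = 0 ∧ LinearIndependent K ![c, c'] := by
  set L := Fintype.linearCombination K v
  have hrange : LinearMap.range L ≤ W := by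
    rintro _ ⟨c, rfl⟩
    rw [Fintype.linearCombination_apply]
    exact Submodule.sum_mem _ fun i _ => Submodule.smul_mem _ _ (hv i)
  have hrank := L.finrank_range_add_finrank_ker
  rw [Module.finrank_fintype_fun_eq_card] at hrank
  have hker : 1 < Module.finrank K (LinearMap.ker L) := by
    have := Submodule.finrank_mono hrange
    omega
  obtain ⟨x, hx⟩ := Module.finrank_pos_iff_exists_ne_zero.mp (zero_lt_one.trans hker)
  obtain ⟨y, hxy⟩ := exists_linearIndependent_pair_of_one_lt_finrank hker hx
  refine ⟨x, y, x.2, y.2, LinearIndependent.pair_iff.mpr fun s t hst => ?_⟩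
  exact LinearIndependent.pair_iff.mp hxy s t (Subtype.ext hst)

end LinearAlgebra

theorem mul_eq_mul_of_mul_add_mul_eq_zero {R : Type*} [CommRing R] [IsDomain R]
    {a b P Q P' Q' : R} (hab : a ≠ 0 ∨ b ≠ 0) (h : a * P + b * Q = 0)
    (h' : a * P' + b * Q' = 0) : P * Q' = P' * Q := by
  rw [← sub_eq_zero]
  rcases hab with ha | hb
  · refine (mul_eq_zero.mp ?_).resolve_left ha
    linear_combination Q' * h - Q * h'
  · refine (mul_eq_zero.mp ?_).resolve_left hb
    linear_combination P * h' - P' * h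

namespace MvPolynomial

section CommRing

variable {σ R : Type*} [CommRing R]

theorem pderiv_comm (i j : σ) (p : MvPolynomial σ R) :
    pderiv i (pderiv j p) = pderiv j (pderiv i p) := by
  have h : ⁅pderiv i, pderiv j⁆ = (0 : Derivation R (MvPolynomial σ R) (MvPolynomial σ R)) :=
    derivation_ext fun l => by
      classical
      rw [Derivation.commutator_apply, pderiv_X, pderiv_X]
      simp [Pi.single_apply, apply_ite]
  have hp := congr($h p)
  rwa [Derivation.commutator_apply, Derivation.zero_apply, sub_eq_zero] at hp

theorem totalDegree_pderiv_lt {i : σ} {p : MvPolynomial σ R} (h : pderiv i p ≠ 0) :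
    (pderiv i p).totalDegree < p.totalDegree := by
  obtain ⟨m, hm, hmax⟩ := Finset.exists_mem_eq_sup _ (support_nonempty.mpr h)
    fun m : σ →₀ ℕ => m.sum fun _ e => e
  have hcoeff : coeff (m + Finsupp.single i 1) p ≠ 0 := by
    intro h0
    rw [mem_support_iff, coeff_pderiv, h0, zero_mul] at hm
    exact hm rfl
  have := le_totalDegree (mem_support_iff.mpr hcoeff)
  rw [Finsupp.sum_add_index' (fun _ => rfl) (fun _ _ _ => rfl),
    Finsupp.sum_single_index rfl] at this
  rw [totalDegree, hmax]
  omega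

theorem totalDegree_mul_pderiv_lt {a f : MvPolynomial σ R} {d : ℕ} (i : σ)
    (ha : a.totalDegree ≤ d) (hf : 0 < f.totalDegree) :
    (a * pderiv i f).totalDegree < d + f.totalDegree := by
  by_cases h0 : pderiv i f = 0
  · rw [h0, mul_zero, totalDegree_zero]
    omega
  · have := totalDegree_pderiv_lt h0
    exact (totalDegree_mul _ _).trans_lt (by omega)

variable [IsDomain R]

theorem pderiv_eq_zero_of_dvd {i : σ} {p : MvPolynomial σ R} (h : p ∣ pderiv i p) :
    pderiv i p = 0 := by
  by_contra hne
  exact (totalDegree_le_of_dvd_of_isDomain h hne).not_gt (totalDegree_pderiv_lt hne)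

theorem totalDegree_cofactor_lt {a b f lam : MvPolynomial σ R} {d : ℕ} {i j : σ}
    (ha : a.totalDegree ≤ d) (hb : b.totalDegree ≤ d) (hf : 0 < f.totalDegree)
    (h : a * pderiv i f + b * pderiv j f = lam * f) (hlam : lam ≠ 0) : lam.totalDegree < d := by
  have hlt := (totalDegree_add _ _).trans_lt
    (max_lt (totalDegree_mul_pderiv_lt i ha hf) (totalDegree_mul_pderiv_lt j hb hf))
  have hf0 : f ≠ 0 := by
    rintro rfl
    simp at hf
  rw [h, totalDegree_mul_of_isDomain hlam hf0] at hlt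
  omega

theorem eq_C_of_forall_pderiv_eq_zero [CharZero R] {p : MvPolynomial σ R}
    (h : ∀ i, pderiv i p = 0) : p = C (coeff 0 p) := by
  classical
  ext m
  rw [coeff_C]
  split_ifs with hm
  · rw [hm]
  obtain ⟨i, hi⟩ : ∃ i, m i ≠ 0 := by
    by_contra! h0
    exact hm (Finsupp.ext fun j => (h0 j).symm)
  have hcoeff := coeff_pderiv (i := i) p (m - Finsupp.single i 1)
  rw [h i, coeff_zero, tsub_add_cancel_of_le
    (Finsupp.single_le_iff.mpr (Nat.one_le_iff_ne_zero.mpr hi))] at hcoeff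
  exact (mul_eq_zero.mp hcoeff.symm).resolve_right (Nat.cast_add_one_ne_zero _)

theorem not_associated_of_forall_ne_C_mul {p q : MvPolynomial σ R} (h : ∀ c : R, p ≠ C c * q) :
    ¬ Associated q p := by
  rintro ⟨u, hu⟩
  obtain ⟨c, -, hc⟩ := isUnit_iff_eq_C_of_isReduced.mp u.isUnit
  exact h c (by rw [← hu, hc, mul_comm])

/-- With `ω = (P dxᵢ + Q dxⱼ) / Φ` and `ω' = (P' dxᵢ + Q' dxⱼ) / Φ` closed and `ω' = (P' / P) ω`,
closedness of `ω'` gives `d(P' / P) ∧ ω = 0`; as `D` annihilates `ω`, it annihilates `d(P' / P)`. -/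
theorem derivation_mul_eq_of_parallel_closed
    {D : Derivation R (MvPolynomial σ R) (MvPolynomial σ R)} {a b : MvPolynomial σ R} {i j : σ}
    (hD : ∀ F, D F = a * pderiv i F + b * pderiv j F) {Φ P Q P' Q' : MvPolynomial σ R}
    (hΦ : Φ ≠ 0) (hP : P ≠ 0)
    (hclosed : pderiv j P * Φ - P * pderiv j Φ = pderiv i Q * Φ - Q * pderiv i Φ)
    (hclosed' : pderiv j P' * Φ - P' * pderiv j Φ = pderiv i Q' * Φ - Q' * pderiv i Φ)
    (hpar : P * Q' = P' * Q) (hrel : a * P + b * Q = 0) :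
    D P' * P = P' * D P := by
  have hpar_i : pderiv i P * Q' + P * pderiv i Q' = pderiv i P' * Q + P' * pderiv i Q := by
    simpa only [pderiv_mul] using congr(pderiv i $hpar)
  have hwronskian : Φ * ((pderiv j P' * P - P' * pderiv j P) * P
      - (pderiv i P' * P - P' * pderiv i P) * Q) = 0 := by
    linear_combination P ^ 2 * hclosed' - (P * P') * hclosed -
      (Φ * pderiv i P + P * pderiv i Φ) * hpar + (Φ * P) * hpar_i
  have hwronskian' : (pderiv j P' * P - P' * pderiv j P) * P
      = (pderiv i P' * P - P' * pderiv i P) * Q := by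
    rw [← sub_eq_zero]
    exact (mul_eq_zero.mp hwronskian).resolve_left hΦ
  rw [hD, hD, ← sub_eq_zero]
  refine (mul_eq_zero.mp (?_ : _ * P = 0)).resolve_right hP
  linear_combination b * hwronskian' + (pderiv i P' * P - P' * pderiv i P) * hrel

end CommRing

section Field

variable {σ k : Type*} [Field k]

theorem totalDegree_pos_of_irreducible {p : MvPolynomial σ k} (hp : Irreducible p) :
    0 < p.totalDegree := by
  refine Nat.pos_of_ne_zero fun h => hp.not_isUnit ?_
  rw [totalDegree_eq_zero_iff_eq_C.mp h] at hp ⊢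
  exact (isUnit_iff_ne_zero.mpr fun hc => hp.ne_zero (by rw [hc, map_zero])).map C

theorem forall_ne_C_mul_of_linearIndependent {V : Type*} [AddCommGroup V] [Module k V]
    {P Q : V →ₗ[k] MvPolynomial σ k} (hPQ : ∀ e, P e = 0 → Q e = 0 → e = 0) {c c' : V}
    (hcc' : LinearIndependent k ![c, c']) (hpar : P c * Q c' = P c' * Q c) (hPc : P c ≠ 0) :
    ∀ t : k, P c' ≠ C t * P c := by
  intro t ht
  have hP : P (c' - t • c) = 0 := by rw [map_sub, map_smul, ht, smul_eq_C_mul, sub_self]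
  have hQ : Q (c' - t • c) = 0 := by
    refine (mul_eq_zero.mp ?_).resolve_left hPc
    rw [map_sub, map_smul, smul_eq_C_mul, mul_sub, hpar, ht]
    ring
  have := LinearIndependent.pair_iff.mp hcc' (-t) 1 (by
    rw [one_smul, neg_smul, neg_add_eq_sub]
    exact hPQ _ hP hQ)
  exact one_ne_zero this.2

instance (s : Finset (σ →₀ ℕ)) : FiniteDimensional k (restrictSupport k (s : Set (σ →₀ ℕ))) :=
  .of_basis (basisRestrictSupport k _)

theorem finrank_restrictSupport (s : Finset (σ →₀ ℕ)) :
    Module.finrank k (restrictSupport k (s : Set (σ →₀ ℕ))) = #s := by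
  simp [Module.finrank_eq_card_basis (basisRestrictSupport k _)]

section LowDegree

variable [Fintype σ] [DecidableEq σ]

def lowDegreeMonomials (d : ℕ) : Finset (σ →₀ ℕ) :=
  (range d).biUnion fun n => univ.finsuppAntidiag n

theorem mem_lowDegreeMonomials {d : ℕ} {m : σ →₀ ℕ} :
    m ∈ lowDegreeMonomials d ↔ m.degree < d := by
  simp [lowDegreeMonomials, mem_finsuppAntidiag, Finsupp.degree_eq_sum]

theorem mem_restrictSupport_lowDegreeMonomials {d : ℕ} {p : MvPolynomial σ k}
    (hp : p ≠ 0 → p.totalDegree < d) :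
    p ∈ restrictSupport k ↑(lowDegreeMonomials (σ := σ) d) := by
  rw [mem_restrictSupport_iff]
  intro m hm
  rw [mem_coe, mem_lowDegreeMonomials]
  exact (le_totalDegree hm).trans_lt (hp (ne_zero_iff.mpr ⟨m, mem_support_iff.mp hm⟩))

end LowDegree

end Field

theorem card_lowDegreeMonomials_fin_two (d : ℕ) :
    #(lowDegreeMonomials (σ := Fin 2) d) = d * (d + 1) / 2 := by
  rw [lowDegreeMonomials, card_biUnion]
  · have hcard (n : ℕ) : (2 + n - 1).choose n = n + 1 := by
      rw [show 2 + n - 1 = n + 1 by omega, Nat.choose_succ_self_right]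
    simp only [card_finsuppAntidiag_nat_eq_choose, card_univ, Fintype.card_fin, hcard]
    have hgauss := sum_range_succ' (fun n => n) d
    rw [sum_range_id, Nat.add_sub_cancel, add_zero] at hgauss
    rw [← hgauss, mul_comm]
  · intro n _ n' _ hnn'
    refine disjoint_left.mpr fun m hm hm' => hnn' ?_
    rw [mem_finsuppAntidiag] at hm hm'
    rw [← hm.1, hm'.1]

section LogForm

variable {σ ι k : Type*} [Field k] [Fintype ι] [DecidableEq ι]

/-- The coefficient of `dxⱼ` in the polynomial `1`-form `(∏ᵢ fᵢ) · ∑ᵢ eᵢ dfᵢ / fᵢ`. -/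
noncomputable def logFormNumerator (f : ι → MvPolynomial σ k) (j : σ) :
    (ι → k) →ₗ[k] MvPolynomial σ k :=
  Fintype.linearCombination k fun i => pderiv j (f i) * ∏ l ∈ univ.erase i, f l

theorem logFormNumerator_apply (f : ι → MvPolynomial σ k) (j : σ) (e : ι → k) :
    logFormNumerator f j e = ∑ i, C (e i) * (pderiv j (f i) * ∏ l ∈ univ.erase i, f l) := by
  simp only [logFormNumerator, Fintype.linearCombination_apply, smul_eq_C_mul]

theorem logFormNumerator_closed (f : ι → MvPolynomial σ k) (e : ι → k) (i j : σ) :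
    pderiv j (logFormNumerator f i e) * ∏ l, f l - logFormNumerator f i e * pderiv j (∏ l, f l) =
      pderiv i (logFormNumerator f j e) * ∏ l, f l -
        logFormNumerator f j e * pderiv i (∏ l, f l) := by
  simp only [logFormNumerator_apply, map_sum, sum_mul, ← sum_sub_distrib]
  refine sum_congr rfl fun t _ => ?_
  rw [← mul_prod_erase _ _ (mem_univ t)]
  simp only [pderiv_mul, pderiv_C, zero_mul, zero_add]
  linear_combination (C (e t) * (∏ l ∈ univ.erase t, f l) ^ 2 * f t) * pderiv_comm j i (f t)

theorem mul_logFormNumerator_add_mul (f : ι → MvPolynomial σ k) {a b : MvPolynomial σ k}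
    {i j : σ} {lam : ι → MvPolynomial σ k}
    (hlam : ∀ l, a * pderiv i (f l) + b * pderiv j (f l) = lam l * f l) (e : ι → k) :
    a * logFormNumerator f i e + b * logFormNumerator f j e =
      Fintype.linearCombination k lam e * ∏ l, f l := by
  simp only [logFormNumerator_apply, Fintype.linearCombination_apply, smul_eq_C_mul, mul_sum,
    sum_mul, ← sum_add_distrib]
  refine sum_congr rfl fun t _ => ?_
  rw [← mul_prod_erase _ _ (mem_univ t)]
  linear_combination (C (e t) * ∏ l ∈ univ.erase t, f l) * hlam t

theorem eq_zero_of_forall_logFormNumerator_eq_zero [CharZero k] {f : ι → MvPolynomial σ k}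
    (hirr : ∀ i, Irreducible (f i)) (hf : Pairwise fun i j => ¬ Associated (f i) (f j))
    {e : ι → k} (he : ∀ j, logFormNumerator f j e = 0) : e = 0 := by
  funext i
  by_contra hei
  have hprime := (hirr i).prime
  have hndvd : ¬ f i ∣ ∏ l ∈ univ.erase i, f l := by
    rw [hprime.dvd_finsetProd_iff]
    rintro ⟨l, hl, hdvd⟩
    exact hf (ne_of_mem_erase hl).symm ((hirr i).associated_of_dvd (hirr l) hdvd)
  have hpderiv (j : σ) : pderiv j (f i) = 0 := by
    refine pderiv_eq_zero_of_dvd ((hprime.dvd_mul.mp ?_).resolve_right hndvd)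
    -- every other term of the vanishing sum `logFormNumerator f j e` is divisible by `f i`
    have hsum := he j
    rw [logFormNumerator_apply, ← add_sum_erase _ _ (mem_univ i)] at hsum
    rw [← (isUnit_iff_ne_zero.mpr hei).map C |>.dvd_mul_left, eq_neg_of_add_eq_zero_left hsum,
      dvd_neg]
    exact dvd_sum fun t ht => dvd_mul_of_dvd_right (dvd_mul_of_dvd_right
      (dvd_prod_of_mem f (mem_erase.mpr ⟨(ne_of_mem_erase ht).symm, mem_univ i⟩)) _) _
  have hconst := eq_C_of_forall_pderiv_eq_zero hpderiv
  exact (totalDegree_pos_of_irreducible (hirr i)).ne' (by rw [hconst, totalDegree_C])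

theorem exists_first_integral_of_linearIndependent [CharZero k]
    {D : Derivation k (MvPolynomial (Fin 2) k) (MvPolynomial (Fin 2) k)}
    {a b : MvPolynomial (Fin 2) k} (hD : ∀ F, D F = a * pderiv 0 F + b * pderiv 1 F)
    (hab : a ≠ 0 ∨ b ≠ 0) {f : ι → MvPolynomial (Fin 2) k} (hirr : ∀ i, Irreducible (f i))
    (hf : Pairwise fun i j => ¬ Associated (f i) (f j)) {lam : ι → MvPolynomial (Fin 2) k}
    (hlam : ∀ l, a * pderiv 0 (f l) + b * pderiv 1 (f l) = lam l * f l) {c c' : ι → k}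
    (hc : Fintype.linearCombination k lam c = 0) (hc' : Fintype.linearCombination k lam c' = 0)
    (hcc' : LinearIndependent k ![c, c']) :
    ∃ F G : MvPolynomial (Fin 2) k, G ≠ 0 ∧ (∀ t : k, F ≠ C t * G) ∧ D F * G = F * D G := by
  set P := logFormNumerator f 0
  set Q := logFormNumerator f 1
  have hPQ (e : ι → k) (hP : P e = 0) (hQ : Q e = 0) : e = 0 :=
    eq_zero_of_forall_logFormNumerator_eq_zero hirr hf (Fin.forall_fin_two.mpr ⟨hP, hQ⟩)
  have hrel {e} (he : Fintype.linearCombination k lam e = 0) : a * P e + b * Q e = 0 := by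
    rw [mul_logFormNumerator_add_mul f hlam, he, zero_mul]
  have hpar := mul_eq_mul_of_mul_add_mul_eq_zero hab (hrel hc) (hrel hc')
  have hΦ : ∏ l, f l ≠ 0 := prod_ne_zero_iff.mpr fun i _ => (hirr i).ne_zero
  have hPQc : P c ≠ 0 ∨ Q c ≠ 0 := by
    by_contra! h
    exact hcc'.ne_zero 0 (hPQ c h.1 h.2)
  rcases hPQc with hPc | hQc
  · exact ⟨P c', P c, hPc, forall_ne_C_mul_of_linearIndependent hPQ hcc' hpar hPc,
      derivation_mul_eq_of_parallel_closed hD hΦ hPc (logFormNumerator_closed f c 0 1)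
        (logFormNumerator_closed f c' 0 1) hpar (hrel hc)⟩
  · exact ⟨Q c', Q c, hQc,
      forall_ne_C_mul_of_linearIndependent (fun e hQ hP => hPQ e hP hQ) hcc'
        (by linear_combination -hpar) hQc,
      derivation_mul_eq_of_parallel_closed (fun F => (hD F).trans (add_comm _ _)) hΦ hQc
        (logFormNumerator_closed f c 0 1).symm (logFormNumerator_closed f c' 0 1).symm
        (by linear_combination -hpar) (by linear_combination hrel hc)⟩

end LogForm

end MvPolynomial

theorem darboux_rational_first_integral_general {k : Type*} [Field k] [CharZero k]
    (a b : MvPolynomial (Fin 2) k) (d : ℕ)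
    (ha : a.totalDegree ≤ d) (hb : b.totalDegree ≤ d)
    (D : Derivation k (MvPolynomial (Fin 2) k) (MvPolynomial (Fin 2) k))
    (hD : ∀ f, D f = a * pderiv (0 : Fin 2) f + b * pderiv (1 : Fin 2) f)
    (N : ℕ) (hN : 2 + d * (d + 1) / 2 ≤ N)
    (f : Fin N → MvPolynomial (Fin 2) k)
    (hirr : ∀ i, Irreducible (f i))
    (hprop : ∀ i j, i ≠ j → ∀ c : k, f i ≠ C c * f j)
    (heig : ∀ i, ∃ lam : MvPolynomial (Fin 2) k, D (f i) = lam * f i) :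
    ∃ F G : MvPolynomial (Fin 2) k, G ≠ 0 ∧ (∀ c : k, F ≠ C c * G) ∧
      D F * G = F * D G := by
  by_cases hab : a = 0 ∧ b = 0
  · obtain ⟨rfl, rfl⟩ := hab
    exact ⟨f ⟨0, by omega⟩, f ⟨1, by omega⟩, (hirr _).ne_zero,
      hprop _ _ (by simp [Fin.ext_iff]), by simp [hD]⟩
  choose lam hlam using heig
  simp only [hD] at hlam
  have hcofactor (i : Fin N) : lam i ∈ restrictSupport k ↑(lowDegreeMonomials (σ := Fin 2) d) :=
    mem_restrictSupport_lowDegreeMonomials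
      (totalDegree_cofactor_lt ha hb (totalDegree_pos_of_irreducible (hirr i)) (hlam i))
  obtain ⟨c, c', hc, hc', hcc'⟩ :=
    exists_linearIndependent_pair_of_linearCombination_eq_zero _ hcofactor (by
      rwa [finrank_restrictSupport, card_lowDegreeMonomials_fin_two, Fintype.card_fin, add_comm])
  exact exists_first_integral_of_linearIndependent hD (not_and_or.mp hab) hirr
    (fun i j hij => not_associated_of_forall_ne_C_mul (hprop j i hij.symm)) hlam hc hc' hcc'

/-- **Darboux's theorem.** If a derivation `D = a·∂x + b·∂y` of `k[x,y]` (with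
`deg a, deg b ≤ d`) admits at least `2 + d(d+1)/2` pairwise non-proportional
irreducible eigenvectors, then `D` admits a rational first integral. -/
theorem darboux_rational_first_integral {k : Type*} [Field k] [CharZero k]
    (a b : MvPolynomial (Fin 2) k) (d : ℕ) (hd : 0 < d)
    (ha : a.totalDegree ≤ d) (hb : b.totalDegree ≤ d)
    (D : Derivation k (MvPolynomial (Fin 2) k) (MvPolynomial (Fin 2) k))
    (hD : ∀ f, D f = a * pderiv (0 : Fin 2) f + b * pderiv (1 : Fin 2) f)
    (N : ℕ) (hN : 2 + d * (d + 1) / 2 ≤ N)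
    (f : Fin N → MvPolynomial (Fin 2) k)
    (hirr : ∀ i, Irreducible (f i))
    (hprop : ∀ i j, i ≠ j → ∀ c : k, f i ≠ C c * f j)
    (heig : ∀ i, ∃ lam : MvPolynomial (Fin 2) k, D (f i) = lam * f i) :
    ∃ F G : MvPolynomial (Fin 2) k, G ≠ 0 ∧ (∀ c : k, F ≠ C c * G) ∧
      D F * G = F * D G :=
  darboux_rational_first_integral_general a b d ha hb D hD N hN f hirr hprop heig
end

section
/- Let k be a field of characteristic zero, D a k-derivation of k[x,y], and g₁,…,g_ℓ ∈ k[x,y] pairwise coprime polynomials such that for every i one has D(g_i) ≠ 0 and g_i is coprime with D(g_i). Set q_i := ∏_{j≠i} g_j. Then the polynomials q₁·D(g₁),…,q_ℓ·D(g_ℓ) are linearly independent over k. -/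
open MvPolynomial Finset

/-- A unit of a multivariate polynomial ring over a field is a constant. -/
lemma exists_C_of_isUnit_aux {k : Type*} [Field k] :
    ∀ {n : ℕ} (p : MvPolynomial (Fin n) k), IsUnit p → ∃ c : k, p = MvPolynomial.C c := by
  intro n
  induction n with
  | zero =>
    intro p _
    exact ⟨_, MvPolynomial.eq_C_of_isEmpty p⟩
  | succ n ih =>
    intro p hp
    have h2 : IsUnit (MvPolynomial.finSuccEquiv k n p) := hp.map _
    obtain ⟨r, hr, hCr⟩ := Polynomial.isUnit_iff.mp h2
    obtain ⟨c, rfl⟩ := ih r hr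
    refine ⟨c, ?_⟩
    have h3 := congrArg (MvPolynomial.finSuccEquiv k n).symm hCr
    rw [AlgEquiv.symm_apply_apply] at h3
    have h4 := RingHom.congr_fun (MvPolynomial.finSuccEquiv_comp_C_eq_C (R := k) n) c
    simp only [RingHom.comp_apply] at h4
    rw [← h3]
    exact h4.symm ▸ h4

/-- If `g₁, …, g_ℓ` are pairwise coprime polynomials, none annihilated by `D`, each
coprime with its image `D(gᵢ)`, then the polynomials `qᵢ·D(gᵢ)` (where
`qᵢ = ∏_{j ≠ i} gⱼ`) are linearly independent over `k`. -/
theorem linearIndependent_prod_mul_derivation {k : Type*} [Field k] [CharZero k] {ℓ : ℕ}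
    (D : Derivation k (MvPolynomial (Fin 2) k) (MvPolynomial (Fin 2) k))
    (g : Fin ℓ → MvPolynomial (Fin 2) k)
    (hpairwise : ∀ i j, i ≠ j → ∀ p : MvPolynomial (Fin 2) k, p ∣ g i → p ∣ g j → IsUnit p)
    (hker : ∀ i, D (g i) ≠ 0)
    (hcop : ∀ i, ∀ p : MvPolynomial (Fin 2) k, p ∣ g i → p ∣ D (g i) → IsUnit p) :
    LinearIndependent k
      (fun i : Fin ℓ => (∏ j ∈ Finset.univ.erase i, g j) * D (g i)) := by
  rw [Fintype.linearIndependent_iff]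
  intro c hc i
  by_contra hci
  -- abbreviation for the products
  set v : Fin ℓ → MvPolynomial (Fin 2) k :=
    fun i => (∏ j ∈ Finset.univ.erase i, g j) * D (g i) with hv
  -- isolate the i-th term
  have hsum : c i • v i = - ∑ j ∈ Finset.univ.erase i, c j • v j := by
    have := Finset.add_sum_erase Finset.univ (fun j => c j • v j) (Finset.mem_univ i)
    rw [hc] at this
    linear_combination (norm := module) this
  -- g i divides each term of the right-hand side
  have hdvd_rhs : g i ∣ - ∑ j ∈ Finset.univ.erase i, c j • v j := by
    refine dvd_neg.mpr (Finset.dvd_sum fun j hj => ?_)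
    obtain ⟨hij, -⟩ := Finset.mem_erase.mp hj
    have hgi : g i ∣ ∏ m ∈ Finset.univ.erase j, g m :=
      Finset.dvd_prod_of_mem g (Finset.mem_erase.mpr ⟨Ne.symm hij, Finset.mem_univ i⟩)
    have : g i ∣ v j := dvd_mul_of_dvd_left hgi _
    rw [MvPolynomial.smul_eq_C_mul]
    exact this.mul_left _
  have hdvd0 : g i ∣ c i • v i := hsum ▸ hdvd_rhs
  -- remove the nonzero scalar
  have hdvd : g i ∣ v i := by
    have hx : v i = C (c i)⁻¹ * (c i • v i) := by
      rw [MvPolynomial.smul_eq_C_mul, ← mul_assoc, ← MvPolynomial.C_mul,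
        inv_mul_cancel₀ hci, MvPolynomial.C_1, one_mul]
    rw [hx]
    exact hdvd0.mul_left _
  -- g i is relatively prime to v i
  have hrel : IsRelPrime (g i) (v i) := by
    refine IsRelPrime.mul_right ?_ ?_
    · refine IsRelPrime.prod_right fun j hj => ?_
      obtain ⟨hij, -⟩ := Finset.mem_erase.mp hj
      intro d hd1 hd2
      exact hpairwise i j (Ne.symm hij) d hd1 hd2
    · intro d hd1 hd2
      exact hcop i d hd1 hd2
  -- hence g i is a unit, so a constant, so D (g i) = 0, contradiction
  have hunit : IsUnit (g i) := hrel dvd_rfl hdvd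
  obtain ⟨c0, hc0⟩ := exists_C_of_isUnit_aux (g i) hunit
  apply hker i
  rw [hc0, ← MvPolynomial.algebraMap_eq]
  exact D.map_algebraMap c0
end

section
/- Let k be an algebraically closed field of characteristic zero and D a nonzero k-derivation of k[x,y]. Then the following are equivalent: (i) there exist a nonconstant polynomial p ∈ k[x] ⊂ k[x,y] and a k-algebra automorphism φ of k[x,y] such that D(φ(p)) = 0 (i.e. D admits an eigenvector with null eigenvalue which is equivalent to an element of k[x]); (ii) there exist a k-algebra automorphism ψ of k[x,y] and a nonzero b ∈ k[x,y] such that ψ ∘ (b·∂y) = D ∘ ψ, i.e. D is conjugate to b·∂y. -/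
open MvPolynomial

/-- Conjugate of a derivation by an algebra automorphism. -/
noncomputable def conjDeriv {k : Type*} [CommRing k] {A : Type*} [CommRing A] [Algebra k A]
    (D : Derivation k A A) (φ : A ≃ₐ[k] A) : Derivation k A A where
  toLinearMap := φ.symm.toLinearMap ∘ₗ D.toLinearMap ∘ₗ φ.toLinearMap
  map_one_eq_zero' := by simp
  leibniz' a b := by
    simp only [LinearMap.coe_comp, Function.comp_apply, AlgEquiv.toLinearMap_apply,
      Derivation.coeFn_coe, map_mul, Derivation.leibniz, map_add, smul_eq_mul]
    simp [mul_comm]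

@[simp] lemma conjDeriv_apply {k : Type*} [CommRing k] {A : Type*} [CommRing A] [Algebra k A]
    (D : Derivation k A A) (φ : A ≃ₐ[k] A) (f : A) :
    conjDeriv D φ f = φ.symm (D (φ f)) := rfl

/-- A nonzero derivation of `k[x,y]` admits an eigenvector with null eigenvalue which is
equivalent to an element of `k[x]` if and only if it is conjugate to `b·∂y` for some
nonzero `b`. -/
theorem kernel_rectifiable_iff_conjugate_b_dy {k : Type*} [Field k] [CharZero k]
    [IsAlgClosed k]
    (D : Derivation k (MvPolynomial (Fin 2) k) (MvPolynomial (Fin 2) k)) (hD : D ≠ 0) :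
    (∃ p : Polynomial k, 0 < p.natDegree ∧
        ∃ φ : MvPolynomial (Fin 2) k ≃ₐ[k] MvPolynomial (Fin 2) k,
          D (φ (Polynomial.aeval (X 0 : MvPolynomial (Fin 2) k) p)) = 0) ↔
      (∃ (ψ : MvPolynomial (Fin 2) k ≃ₐ[k] MvPolynomial (Fin 2) k)
          (b : MvPolynomial (Fin 2) k), b ≠ 0 ∧
          ∀ f, ψ (b * pderiv (1 : Fin 2) f) = D (ψ f)) := by
  constructor
  · rintro ⟨p, hp, φ, h⟩
    set E := conjDeriv D φ with hE
    have hEp : E (Polynomial.aeval (X 0 : MvPolynomial (Fin 2) k) p) = 0 := by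
      rw [conjDeriv_apply, h, map_zero]
    -- chain rule
    have hchain := E.comp_aeval_eq (a := (X 0 : MvPolynomial (Fin 2) k)) p
    rw [hEp] at hchain
    have hd : p.derivative ≠ 0 := fun hzero => by
      have := Polynomial.natDegree_eq_zero_of_derivative_eq_zero hzero
      omega
    have hinj : ∀ q : Polynomial k,
        Polynomial.aeval (X 0 : MvPolynomial (Fin 2) k) q = 0 → q = 0 := by
      intro q hq
      have := congrArg (aeval (fun i : Fin 2 => if i = 0 then (Polynomial.X : Polynomial k)
        else 0)) hq
      rw [map_zero, ← Polynomial.aeval_algHom_apply] at this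
      simpa using this
    have hc : Polynomial.aeval (X 0 : MvPolynomial (Fin 2) k) p.derivative ≠ 0 :=
      fun hz => hd (hinj _ hz)
    have hEX0 : E (X 0) = 0 := by
      rcases mul_eq_zero.mp hchain.symm with h' | h'
      · exact absurd h' hc
      · exact h'
    set b := E (X (1 : Fin 2)) with hb
    have hEeq : E = b • (pderiv (1 : Fin 2) :
        Derivation k (MvPolynomial (Fin 2) k) (MvPolynomial (Fin 2) k)) := by
      apply derivation_ext
      intro i
      fin_cases i
      · simpa using hEX0
      · simp [hb]
    have hbne : b ≠ 0 := by
      intro h0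
      apply hD
      apply Derivation.ext
      intro f
      have h3 : E (φ.symm f) = 0 := by rw [hEeq, h0]; simp
      rw [hE, conjDeriv_apply, AlgEquiv.apply_symm_apply] at h3
      simpa using h3
    refine ⟨φ, b, hbne, fun f => ?_⟩
    have : E f = b * pderiv (1 : Fin 2) f := by rw [hEeq]; simp [smul_eq_mul]
    rw [conjDeriv_apply] at this
    have := congrArg φ this.symm
    simpa using this
  · rintro ⟨ψ, b, hb, h⟩
    refine ⟨Polynomial.X, by simp, ψ, ?_⟩
    rw [← h]
    simp
end

section
/- Let k be a field of characteristic zero, a, b ∈ k[x] with a ≠ 0, and λ₁, λ₂ ∈ k. If P₁, P₂ ∈ k[x] satisfy P₁' = a·P₁ + λ₁·b and P₂' = a·P₂ + λ₂·b, then λ₁·P₂ = λ₂·P₁ (equivalently −λ₂·P₁ + λ₁·P₂ = 0). -/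
/-! Since `P₁` and `P₂` solve the same equation up to the multiple of `b`, the combination
`Q = λ₁ P₂ - λ₂ P₁` solves the homogeneous equation `Q' = a Q`. Differentiation lowers the degree
of a nonzero polynomial while multiplication by `a ≠ 0` does not, so `Q = 0`. -/

namespace Polynomial

theorem eq_zero_of_derivative_eq_mul {R : Type*} [Semiring R] [NoZeroDivisors R]
    {a Q : R[X]} (ha : a ≠ 0) (hQ : derivative Q = a * Q) : Q = 0 := by
  by_contra hQ0
  have hlt : (derivative Q).degree < Q.degree := degree_derivative_lt hQ0
  have hle : Q.degree ≤ (a * Q).degree := by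
    rw [degree_mul]
    exact le_add_of_nonneg_left (zero_le_degree_iff.mpr ha)
  exact (hQ ▸ hlt).not_ge hle

theorem derivative_smul_sub_smul_of_derivative_eq {R : Type*} [CommRing R]
    {a b P₁ P₂ : R[X]} {c₁ c₂ : R}
    (h₁ : derivative P₁ = a * P₁ + c₁ • b) (h₂ : derivative P₂ = a * P₂ + c₂ • b) :
    derivative (c₁ • P₂ - c₂ • P₁) = a * (c₁ • P₂ - c₂ • P₁) := by
  rw [map_sub, map_smul, map_smul, h₁, h₂]
  simp only [smul_eq_C_mul]
  ring

end Polynomial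

theorem ode_solutions_proportional_general {k : Type*} [Field k]
    (a b : Polynomial k) (ha : a ≠ 0) (lam₁ lam₂ : k) (P₁ P₂ : Polynomial k)
    (h₁ : Polynomial.derivative P₁ = a * P₁ + lam₁ • b)
    (h₂ : Polynomial.derivative P₂ = a * P₂ + lam₂ • b) :
    lam₁ • P₂ = lam₂ • P₁ :=
  sub_eq_zero.mp <| Polynomial.eq_zero_of_derivative_eq_mul ha <|
    Polynomial.derivative_smul_sub_smul_of_derivative_eq h₁ h₂

/-- If `P₁` and `P₂` are polynomial solutions of `h' = a·h + λ₁·b` and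
`h' = a·h + λ₂·b` respectively (with `a ≠ 0`), then `λ₁·P₂ = λ₂·P₁`. -/
theorem ode_solutions_proportional {k : Type*} [Field k] [CharZero k]
    (a b : Polynomial k) (ha : a ≠ 0) (lam₁ lam₂ : k) (P₁ P₂ : Polynomial k)
    (h₁ : Polynomial.derivative P₁ = a * P₁ + lam₁ • b)
    (h₂ : Polynomial.derivative P₂ = a * P₂ + lam₂ • b) :
    lam₁ • P₂ = lam₂ • P₁ :=
  ode_solutions_proportional_general a b ha lam₁ lam₂ P₁ P₂ h₁ h₂
end

section
/- Let k be an algebraically closed field of characteristic zero and let D = ∂x + (a(x)·y + b(x))·∂y be a Shamsuddin derivation with a ≠ 0. Then D admits an eigenvector (a nonconstant f ∈ k[x,y] with D(f) = λ·f for some λ ∈ k[x,y]) if and only if there exists P ∈ k[x] with P' = a·P + b. Moreover, if P' = a·P + b then D(y − P) = a·(y − P), and every irreducible eigenvector of D is a k*-scalar multiple of y − P. -/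
/-!
Identify `k[x, y]` with `k[x][y]`. On the `y`-coefficients, `D` acts by
`f_m ↦ f_m' + m a f_m + (m + 1) b f_{m+1}`, so it does not raise the `y`-degree and every
eigenvalue lies in `k[x]`. If `F` has `y`-degree `n`, its top coefficient satisfies
`f_n' = (λ - n a) f_n`; since a nonzero polynomial is an eigenvector of `d/dx` only for the
eigenvalue `0`, this forces `λ = n a` and `f_n = c ∈ k`. The next coefficient then gives
`f_{n-1}' = a f_{n-1} - n c b`, so `P = -f_{n-1} / (n c)` solves `P' = a P + b`.
Conversely, given such a `P`, `F - c (y - P)^n` is an eigenvector for `n a` of `y`-degree below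
`n`; since a nonzero eigenvector of `y`-degree `m` has eigenvalue `m a` and `a ≠ 0`, it vanishes.
An irreducible `c (y - P)^n` has `n = 1`.
-/

theorem Derivation.apply_pow_of_apply_eq_mul {R S : Type*} [CommSemiring R] [CommSemiring S]
    [Algebra R S] (D : Derivation R S S) {s t : S} (h : D s = t * s) (n : ℕ) :
    D (s ^ n) = n * t * s ^ n := by
  induction n with
  | zero => simp
  | succ n ih => rw [pow_succ, D.leibniz, ih, h, smul_eq_mul, smul_eq_mul]; push_cast; ring

namespace Polynomial

theorem eq_zero_of_derivative_eq_mul_self {R : Type*} [CommRing R] [IsDomain R]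
    {p q : R[X]} (hp : p ≠ 0) (h : derivative p = q * p) : q = 0 := by
  by_contra hq
  have hdeg : p.natDegree ≠ 0 := by
    intro h0
    rw [eq_C_of_natDegree_eq_zero h0, derivative_C] at h
    exact mul_ne_zero hq (by rwa [← eq_C_of_natDegree_eq_zero h0]) h.symm
  have := natDegree_derivative_lt hdeg
  rw [h, natDegree_mul hq hp] at this
  omega

namespace Bivariate

variable {k : Type*}

section CommRing
variable [CommRing k]

noncomputable def coeffDerivative : Derivation k k[X][Y] k[X][Y] :=
  PolynomialModule.equivPolynomialSelf.compDer (derivative' (R := k)).mapCoeffs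

@[simp] theorem coeff_coeffDerivative (F : k[X][Y]) (n : ℕ) :
    (coeffDerivative F).coeff n = derivative (F.coeff n) := rfl

@[simp] theorem coeffDerivative_C (p : k[X]) : coeffDerivative (C p) = C (derivative p) := by
  ext n; simp [coeff_C, apply_ite (derivative (R := k))]

@[simp] theorem coeffDerivative_X : coeffDerivative (Y : k[X][Y]) = 0 := by
  ext n; simp [coeff_X, apply_ite (derivative (R := k))]

/-- In `k[X][Y]` the variable `x` is `C X`, so this is `∂x + (A y + B) ∂y`. -/
noncomputable def shamsuddin (A B : k[X]) : Derivation k k[X][Y] k[X][Y] :=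
  coeffDerivative + (C A * Y + C B) • (derivative' (R := k[X])).restrictScalars k

variable {A B : k[X]}

theorem shamsuddin_apply (F : k[X][Y]) :
    shamsuddin A B F = coeffDerivative F + (C A * Y + C B) * derivative F := rfl

theorem coeff_shamsuddin (F : k[X][Y]) (m : ℕ) :
    (shamsuddin A B F).coeff m =
      derivative (F.coeff m) + m * A * F.coeff m + (m + 1) * B * F.coeff (m + 1) := by
  rw [shamsuddin_apply, add_mul, add_mul, mul_assoc, coeff_add, coeff_add, coeff_C_mul,
    coeff_C_mul, coeff_coeffDerivative, coeff_derivative]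
  cases m with
  | zero => simp
  | succ m => rw [coeff_X_mul, coeff_derivative]; push_cast; ring

theorem shamsuddin_C (p : k[X]) : shamsuddin A B (C p) = C (derivative p) := by
  simp [shamsuddin_apply]

theorem shamsuddin_Y_sub_C {P : k[X]} (hP : derivative P = A * P + B) :
    shamsuddin A B (Y - C P) = C A * (Y - C P) := by
  rw [map_sub, shamsuddin_C, shamsuddin_apply, hP]
  simp only [coeffDerivative_X, derivative_X, mul_one, zero_add, map_add, map_mul,
    add_sub_add_right_eq_sub]
  ring

theorem natDegree_shamsuddin_le (F : k[X][Y]) :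
    (shamsuddin A B F).natDegree ≤ F.natDegree := by
  refine natDegree_le_iff_coeff_eq_zero.mpr fun m hm => ?_
  rw [coeff_shamsuddin, coeff_eq_zero_of_natDegree_lt hm,
    coeff_eq_zero_of_natDegree_lt (hm.trans m.lt_succ_self)]
  simp

theorem derivative_leadingCoeff_of_shamsuddin_eq_C_mul {F : k[X][Y]} {l : k[X]}
    (h : shamsuddin A B F = C l * F) :
    derivative F.leadingCoeff = (l - F.natDegree * A) * F.leadingCoeff := by
  have htop := congrArg (coeff · F.natDegree) h
  simp only [coeff_shamsuddin, coeff_C_mul, coeff_natDegree,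
    coeff_eq_zero_of_natDegree_lt F.natDegree.lt_succ_self, mul_zero, add_zero] at htop
  linear_combination htop

end CommRing

section Domain
variable [CommRing k] [IsDomain k] {A B : k[X]} {F L : k[X][Y]}

theorem eq_C_of_shamsuddin_eq_mul (hF : F ≠ 0) (h : shamsuddin A B F = L * F) :
    ∃ l, L = C l := by
  rcases eq_or_ne L 0 with rfl | hL
  · exact ⟨0, C_0.symm⟩
  have hdeg := natDegree_shamsuddin_le (A := A) (B := B) F
  rw [h, natDegree_mul hL hF] at hdeg
  exact ⟨_, eq_C_of_natDegree_eq_zero (by omega)⟩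

theorem eq_C_natDegree_mul_of_shamsuddin_eq_mul (hF : F ≠ 0) (h : shamsuddin A B F = L * F) :
    L = C (F.natDegree * A) := by
  obtain ⟨l, rfl⟩ := eq_C_of_shamsuddin_eq_mul hF h
  rw [sub_eq_zero.mp (eq_zero_of_derivative_eq_mul_self (leadingCoeff_ne_zero.mpr hF)
    (derivative_leadingCoeff_of_shamsuddin_eq_C_mul h))]

variable [CharZero k]

theorem leadingCoeff_eq_C_of_shamsuddin_eq_mul (hF : F ≠ 0) (h : shamsuddin A B F = L * F) :
    ∃ c : k, F.leadingCoeff = C c := by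
  rw [eq_C_natDegree_mul_of_shamsuddin_eq_mul hF h] at h
  have hder := derivative_leadingCoeff_of_shamsuddin_eq_C_mul h
  rw [sub_self, zero_mul] at hder
  exact ⟨_, eq_C_of_natDegree_eq_zero (derivative_eq_zero.mp hder)⟩

theorem exists_eq_C_C_of_shamsuddin_eq_mul (h0 : F.natDegree = 0)
    (h : shamsuddin A B F = L * F) : ∃ c : k, F = C (C c) := by
  rcases eq_or_ne F 0 with rfl | hF
  · exact ⟨0, by simp⟩
  obtain ⟨c, hc⟩ := leadingCoeff_eq_C_of_shamsuddin_eq_mul hF h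
  exact ⟨c, by rw [← hc, leadingCoeff, h0, ← eq_C_of_natDegree_eq_zero h0]⟩

theorem eq_C_mul_pow_of_shamsuddin_eq_mul (hA : A ≠ 0) {P : k[X]}
    (hP : derivative P = A * P + B) (hF : F ≠ 0) (h : shamsuddin A B F = L * F) :
    ∃ c : k, F = C (C c) * (Y - C P) ^ F.natDegree := by
  have hL := eq_C_natDegree_mul_of_shamsuddin_eq_mul hF h
  obtain ⟨c, hc⟩ := leadingCoeff_eq_C_of_shamsuddin_eq_mul hF h
  set n := F.natDegree
  set Q : k[X][Y] := C (C c) * (Y - C P) ^ n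
  have hQ : shamsuddin A B Q = C (n * A) * Q := by
    rw [Derivation.leibniz, (shamsuddin A B).apply_pow_of_apply_eq_mul (shamsuddin_Y_sub_C hP),
      shamsuddin_C, derivative_C, C_0, smul_zero, add_zero, smul_eq_mul, map_mul, map_natCast]
    ring
  have hQn : Q.coeff n = C c := by
    have hmon : ((Y - C P) ^ n).coeff n = 1 := by
      rw [← ((monic_X_sub_C P).pow n).leadingCoeff, leadingCoeff, natDegree_pow,
        natDegree_X_sub_C, mul_one]
    rw [coeff_C_mul, hmon, mul_one]
  refine ⟨c, sub_eq_zero.mp (by_contra fun hH => ?_)⟩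
  have hH' : shamsuddin A B (F - Q) = C (n * A) * (F - Q) := by rw [map_sub, h, hL, hQ]; ring
  have hdeg : (F - Q).natDegree = n := by
    have := congrArg (coeff · 0) (eq_C_natDegree_mul_of_shamsuddin_eq_mul hH hH')
    simp only [coeff_C_zero] at this
    exact_mod_cast (mul_right_cancel₀ hA this).symm
  apply leadingCoeff_ne_zero.mpr hH
  rw [leadingCoeff, hdeg, coeff_sub, hQn, coeff_natDegree, hc, sub_self]

end Domain

section Field
variable [Field k] [CharZero k] {A B : k[X]} {F L : k[X][Y]}

theorem exists_derivative_eq_of_shamsuddin_eq_mul (hF : 0 < F.natDegree)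
    (h : shamsuddin A B F = L * F) : ∃ P : k[X], derivative P = A * P + B := by
  have hF0 := ne_zero_of_natDegree_gt hF
  have hL := eq_C_natDegree_mul_of_shamsuddin_eq_mul hF0 h
  obtain ⟨c, hc⟩ := leadingCoeff_eq_C_of_shamsuddin_eq_mul hF0 h
  obtain ⟨m, hm⟩ := Nat.exists_eq_add_one.mpr hF
  have hc0 : c ≠ 0 := by
    rintro rfl
    exact leadingCoeff_ne_zero.mpr hF0 (by rw [hc, C_0])
  have htop : F.coeff (m + 1) = C c := by rw [← hm, coeff_natDegree, hc]
  have hsub := congrArg (coeff · m) h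
  simp only [coeff_shamsuddin, hL, coeff_C_mul, htop, hm] at hsub
  push_cast at hsub
  have hu : C ((m + 1) * c)⁻¹ * ((m + 1) * C c) = 1 := by
    have hu0 : ((m : k) + 1) * c ≠ 0 := mul_ne_zero m.cast_add_one_ne_zero hc0
    rw [show ((m : k[X]) + 1) * C c = C ((m + 1) * c) by simp, ← C_mul, inv_mul_cancel₀ hu0, C_1]
  refine ⟨-(C ((m + 1) * c)⁻¹ * F.coeff m), ?_⟩
  rw [derivative_neg, derivative_C_mul]
  linear_combination -C ((m + 1) * c)⁻¹ * hsub + B * hu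

theorem eq_C_mul_of_irreducible_of_shamsuddin_eq_mul (hA : A ≠ 0) {P : k[X]}
    (hP : derivative P = A * P + B) (hF : Irreducible F) (h : shamsuddin A B F = L * F) :
    ∃ c : k, c ≠ 0 ∧ F = C (C c) * (Y - C P) := by
  obtain ⟨c, hc⟩ := eq_C_mul_pow_of_shamsuddin_eq_mul hA hP hF.ne_zero h
  have hc0 : c ≠ 0 := by
    rintro rfl
    exact hF.ne_zero (by rw [hc, C_0, C_0, zero_mul])
  have hn : F.natDegree = 1 := by
    by_contra hn
    rw [hc, irreducible_isUnit_mul (isUnit_C.mpr (isUnit_C.mpr hc0.isUnit))] at hF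
    exact not_irreducible_pow hn hF
  exact ⟨c, hc0, by rw [hc, hn, pow_one]⟩

end Field

section Transfer
open MvPolynomial (pderiv)
variable [CommRing k]

theorem equivMvPolynomial_C (p : k[X]) :
    equivMvPolynomial k (C p) = aeval (MvPolynomial.X 0) p := by
  have : ((equivMvPolynomial k).toAlgHom.comp CAlgHom) = aeval (MvPolynomial.X 0) :=
    algHom_ext (by simp [CAlgHom])
  exact DFunLike.congr_fun this p

theorem equivMvPolynomial_Y_sub_C (P : k[X]) :
    equivMvPolynomial k (Y - C P) = MvPolynomial.X 1 - aeval (MvPolynomial.X 0) P := by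
  rw [map_sub, equivMvPolynomial_X, equivMvPolynomial_C]

theorem totalDegree_equivMvPolynomial_eq_zero_iff {F : k[X][Y]} :
    (equivMvPolynomial k F).totalDegree = 0 ↔ ∃ c : k, F = C (C c) := by
  rw [MvPolynomial.totalDegree_eq_zero_iff_eq_C]
  constructor
  · intro h
    exact ⟨_, by rw [← (equivMvPolynomial k).symm_apply_apply F, h, equivMvPolynomial_symm_C]⟩
  · rintro ⟨c, rfl⟩
    simp

theorem apply_equivMvPolynomial_of_eq_shamsuddin {A B : k[X]}
    {D : Derivation k (MvPolynomial (Fin 2) k) (MvPolynomial (Fin 2) k)}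
    (hD : ∀ f, D f = pderiv 0 f +
      (aeval (MvPolynomial.X 0) A * MvPolynomial.X 1 + aeval (MvPolynomial.X 0) B) * pderiv 1 f)
    (F : k[X][Y]) :
    D (equivMvPolynomial k F) = equivMvPolynomial k (shamsuddin A B F) := by
  rw [hD, pderiv_zero_equivMvPolynomial, pderiv_one_equivMvPolynomial, shamsuddin_apply]
  simp only [map_add, map_mul, equivMvPolynomial_C, equivMvPolynomial_X]
  rfl

end Transfer

end Bivariate

end Polynomial

open MvPolynomial

theorem shamsuddin_eigenvectors_general {k : Type*} [Field k] [CharZero k]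
    (a b : Polynomial k) (ha : a ≠ 0)
    (D : Derivation k (MvPolynomial (Fin 2) k) (MvPolynomial (Fin 2) k))
    (hD : ∀ f, D f = pderiv (0 : Fin 2) f +
      (Polynomial.aeval (X 0 : MvPolynomial (Fin 2) k) a * X 1 +
        Polynomial.aeval (X 0 : MvPolynomial (Fin 2) k) b) * pderiv (1 : Fin 2) f) :
    ((∃ (f lam : MvPolynomial (Fin 2) k), f.totalDegree ≠ 0 ∧ D f = lam * f) ↔
      ∃ P : Polynomial k, Polynomial.derivative P = a * P + b) ∧
    (∀ P : Polynomial k, Polynomial.derivative P = a * P + b →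
      (D (X 1 - Polynomial.aeval (X 0 : MvPolynomial (Fin 2) k) P) =
        Polynomial.aeval (X 0 : MvPolynomial (Fin 2) k) a *
          (X 1 - Polynomial.aeval (X 0 : MvPolynomial (Fin 2) k) P)) ∧
      ∀ f : MvPolynomial (Fin 2) k, Irreducible f → (∃ lam, D f = lam * f) →
        ∃ c : k, c ≠ 0 ∧
          f = C c * (X 1 - Polynomial.aeval (X 0 : MvPolynomial (Fin 2) k) P)) := by
  open Polynomial.Bivariate in
  have eigen {f lam} (h : D f = lam * f) : shamsuddin a b ((equivMvPolynomial k).symm f) =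
      (equivMvPolynomial k).symm lam * (equivMvPolynomial k).symm f := by
    apply (equivMvPolynomial k).injective
    simp only [map_mul, ← apply_equivMvPolynomial_of_eq_shamsuddin hD, AlgEquiv.apply_symm_apply, h]
  have hline (P) (hP : Polynomial.derivative P = a * P + b) :
      D (X 1 - Polynomial.aeval (X 0) P) =
        Polynomial.aeval (X 0) a * (X 1 - Polynomial.aeval (X 0) P) := by
    rw [← equivMvPolynomial_Y_sub_C, apply_equivMvPolynomial_of_eq_shamsuddin hD,
      shamsuddin_Y_sub_C hP, map_mul, equivMvPolynomial_C]
  refine ⟨⟨?_, ?_⟩, fun P hP => ⟨hline P hP, ?_⟩⟩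
  · rintro ⟨f, lam, hf, h⟩
    refine exists_derivative_eq_of_shamsuddin_eq_mul (Nat.pos_of_ne_zero fun h0 => hf ?_) (eigen h)
    rw [← (equivMvPolynomial k).apply_symm_apply f, totalDegree_equivMvPolynomial_eq_zero_iff]
    exact exists_eq_C_C_of_shamsuddin_eq_mul h0 (eigen h)
  · rintro ⟨P, hP⟩
    refine ⟨_, _, ?_, hline P hP⟩
    rw [← equivMvPolynomial_Y_sub_C, Ne, totalDegree_equivMvPolynomial_eq_zero_iff]
    rintro ⟨c, hc⟩
    simpa using congrArg Polynomial.natDegree hc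
  · rintro f hf ⟨lam, h⟩
    obtain ⟨c, hc0, hc⟩ := eq_C_mul_of_irreducible_of_shamsuddin_eq_mul ha hP
      (hf.map (equivMvPolynomial k).symm) (eigen h)
    refine ⟨c, hc0, ?_⟩
    rw [← (equivMvPolynomial k).apply_symm_apply f, hc, map_mul, equivMvPolynomial_Y_sub_C,
      equivMvPolynomial_C_C]

/-- A Shamsuddin derivation `D = ∂x + (a(x)y + b(x))·∂y` with `a ≠ 0` admits an
eigenvector iff `E₁(a,b)` has a polynomial solution `P`; in that case
`D(y − P) = a·(y − P)` and every irreducible eigenvector is a scalar multiple of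
`y − P`. -/
theorem shamsuddin_eigenvectors {k : Type*} [Field k] [CharZero k] [IsAlgClosed k]
    (a b : Polynomial k) (ha : a ≠ 0)
    (D : Derivation k (MvPolynomial (Fin 2) k) (MvPolynomial (Fin 2) k))
    (hD : ∀ f, D f = pderiv (0 : Fin 2) f +
      (Polynomial.aeval (X 0 : MvPolynomial (Fin 2) k) a * X 1 +
        Polynomial.aeval (X 0 : MvPolynomial (Fin 2) k) b) * pderiv (1 : Fin 2) f) :
    ((∃ (f lam : MvPolynomial (Fin 2) k), f.totalDegree ≠ 0 ∧ D f = lam * f) ↔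
      ∃ P : Polynomial k, Polynomial.derivative P = a * P + b) ∧
    (∀ P : Polynomial k, Polynomial.derivative P = a * P + b →
      (D (X 1 - Polynomial.aeval (X 0 : MvPolynomial (Fin 2) k) P) =
        Polynomial.aeval (X 0 : MvPolynomial (Fin 2) k) a *
          (X 1 - Polynomial.aeval (X 0 : MvPolynomial (Fin 2) k) P)) ∧
      ∀ f : MvPolynomial (Fin 2) k, Irreducible f → (∃ lam, D f = lam * f) →
        ∃ c : k, c ≠ 0 ∧
          f = C c * (X 1 - Polynomial.aeval (X 0 : MvPolynomial (Fin 2) k) P)) :=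
  shamsuddin_eigenvectors_general a b ha D hD
end

section
/- Let k be an algebraically closed field of characteristic zero, let p, q, ℓ ≥ 1 be integers with p and q coprime, let a_00,…,a_ℓℓ, b_00,…,b_ℓℓ ∈ k with q·a_ℓℓ + p·b_ℓℓ ≠ 0, and set a₁ = Σ_{i=0}^ℓ a_ii·x^{qi}·y^{pi}, b₁ = Σ_{i=0}^ℓ b_ii·x^{qi}·y^{pi} and D = p·x·a₁·∂x + q·y·b₁·∂y. If {a_00, b_00} is linearly independent over ℚ (i.e. m·a_00 + n·b_00 = 0 with m, n ∈ ℤ forces m = n = 0), then D has, up to k*-scalar multiples, only finitely many irreducible eigenvectors: there is a finite set S ⊂ k[x,y] such that every irreducible eigenvector of D is a scalar multiple of an element of S. -/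
/-!
Give `x` weight `-p` and `y` weight `q`, so that `t = x^q y^p` has weight `0`. Writing
`D x = x α(t)` and `D y = y β(t)`, the derivation `D` preserves weights, so comparing top weights
(for the weights and for their negatives) in `D f = λ f` shows `λ = Λ(t)`, and every weighted
homogeneous component of `f` is again an eigenvector. Such a component is `x^a y^b P(t)` with
`P(0) ≠ 0`, and the eigen-equation at `t = 0` reads `a α(0) + b β(0) = Λ(0)`; as `α(0) = p a₀₀`
and `β(0) = q b₀₀` are independent over `ℚ`, this pins down `(a, b)`, so `f` is weighted
homogeneous. An irreducible such `f` is `x`, `y` or `c (t - r)`, and in the last case the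
eigen-equation at `t = r` makes `r` a root of `q α + p β = p q (a₁ + b₁)`.
-/

open MvPolynomial Finset
open scoped Polynomial

namespace MvPolynomial

variable {σ R M : Type*}

section CommSemiring

variable [CommSemiring R] [AddCommMonoid M] {w : σ → M}

theorem weightedHomogeneousComponent_linearMap (L : MvPolynomial σ R →ₗ[R] MvPolynomial σ R)
    (hL : ∀ d r, IsWeightedHomogeneous w (L (monomial d r)) (Finsupp.weight w d)) (m : M)
    (φ : MvPolynomial σ R) :
    weightedHomogeneousComponent w m (L φ) = L (weightedHomogeneousComponent w m φ) := by
  classical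
  induction φ using MvPolynomial.induction_on' with
  | monomial d r =>
    rw [weightedHomogeneousComponent_of_mem (hL d r),
      weightedHomogeneousComponent_of_mem (isWeightedHomogeneous_monomial w d r rfl)]
    split_ifs <;> simp
  | add φ ψ hφ hψ => simp only [map_add, hφ, hψ]

theorem IsWeightedHomogeneous.weightedHomogeneousComponent_mul {ψ : MvPolynomial σ R}
    (hψ : IsWeightedHomogeneous w ψ 0) (m : M) (φ : MvPolynomial σ R) :
    weightedHomogeneousComponent w m (ψ * φ) = ψ * weightedHomogeneousComponent w m φ :=
  weightedHomogeneousComponent_linearMap (LinearMap.mulLeft R ψ)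
    (fun d r => by simpa using hψ.mul (isWeightedHomogeneous_monomial w d r rfl)) m φ

theorem weightedHomogeneousComponent_weight_ne_zero {φ : MvPolynomial σ R} {d : σ →₀ ℕ}
    (hd : d ∈ φ.support) : weightedHomogeneousComponent w (Finsupp.weight w d) φ ≠ 0 := by
  classical
  exact ne_zero_iff.2 ⟨d, by
    rw [coeff_weightedHomogeneousComponent, if_pos rfl]
    exact mem_support_iff.1 hd⟩

theorem weightedHomogeneousComponent_mul_of_le [LinearOrder M] [IsOrderedCancelAddMonoid M]
    {φ ψ : MvPolynomial σ R} {m n : M} (hφ : ∀ d ∈ φ.support, Finsupp.weight w d ≤ m)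
    (hψ : ∀ d ∈ ψ.support, Finsupp.weight w d ≤ n) :
    weightedHomogeneousComponent w (m + n) (φ * ψ) =
      weightedHomogeneousComponent w m φ * weightedHomogeneousComponent w n ψ := by
  classical
  ext d
  rw [coeff_weightedHomogeneousComponent]
  split_ifs with hd
  · rw [coeff_mul, coeff_mul]
    refine Finset.sum_congr rfl fun ⟨a, b⟩ hab => ?_
    rw [Finset.HasAntidiagonal.mem_antidiagonal] at hab
    simp only [coeff_weightedHomogeneousComponent]
    by_cases ha : coeff a φ = 0
    · simp [ha]
    by_cases hb : coeff b ψ = 0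
    · simp [hb]
    have ha' := hφ a (mem_support_iff.2 ha)
    have hb' := hψ b (mem_support_iff.2 hb)
    have hab' : Finsupp.weight w a + Finsupp.weight w b = m + n := by rw [← map_add, hab, hd]
    have ham : Finsupp.weight w a = m :=
      le_antisymm ha' (not_lt.1 fun h => (add_lt_add_of_lt_of_le h hb').ne hab')
    have hbn : Finsupp.weight w b = n := by
      rw [ham] at hab'
      exact add_left_cancel hab'
    simp [ham, hbn]
  · exact (((weightedHomogeneousComponent_isWeightedHomogeneous m φ).mul
      (weightedHomogeneousComponent_isWeightedHomogeneous n ψ)).coeff_eq_zero d hd).symm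

theorem derivation_eq_mkDerivation (D : Derivation R (MvPolynomial σ R) (MvPolynomial σ R)) :
    D = mkDerivation R fun i => D (X i) :=
  derivation_ext fun i => (mkDerivation_X R (fun i => D (X i)) i).symm

theorem isWeightedHomogeneous_derivation_monomial
    {D : Derivation R (MvPolynomial σ R) (MvPolynomial σ R)}
    (hD : ∀ i, IsWeightedHomogeneous w (D (X i)) (w i)) (d : σ →₀ ℕ) (r : R) :
    IsWeightedHomogeneous w (D (monomial d r)) (Finsupp.weight w d) := by
  rw [derivation_eq_mkDerivation D, mkDerivation_monomial, smul_eq_C_mul]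
  refine .C_mul (.sum _ _ _ fun i hi => ?_) r
  dsimp only
  rw [smul_eq_mul, ← Finsupp.weight_sub_single_add (Finsupp.mem_support_iff.1 hi)]
  exact (isWeightedHomogeneous_monomial _ _ _ rfl).mul (hD i)

theorem weightedHomogeneousComponent_derivation
    {D : Derivation R (MvPolynomial σ R) (MvPolynomial σ R)}
    (hD : ∀ i, IsWeightedHomogeneous w (D (X i)) (w i)) (m : M) (φ : MvPolynomial σ R) :
    weightedHomogeneousComponent w m (D φ) = D (weightedHomogeneousComponent w m φ) :=
  weightedHomogeneousComponent_linearMap D.toLinearMap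
    (isWeightedHomogeneous_derivation_monomial hD) m φ

theorem derivation_monomial_of_eq_X_mul
    {D : Derivation R (MvPolynomial σ R) (MvPolynomial σ R)} {u : σ → MvPolynomial σ R}
    (hD : ∀ i, D (X i) = X i * u i) (s : σ →₀ ℕ) (r : R) :
    D (monomial s r) = monomial s r * s.sum fun i n => n • u i := by
  rw [derivation_eq_mkDerivation D, mkDerivation_monomial, Finsupp.sum, Finsupp.sum,
    Finset.smul_sum, Finset.mul_sum]
  refine Finset.sum_congr rfl fun i hi => ?_
  have hmon : ∀ c : R, monomial s c = C c * monomial s 1 := fun c => by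
    rw [C_mul_monomial, mul_one]
  rw [hD, X, smul_eq_mul, ← mul_assoc, monomial_mul, mul_one,
    Finsupp.sub_add_single_one_cancel (Finsupp.mem_support_iff.1 hi), smul_eq_C_mul,
    nsmul_eq_mul, hmon, hmon r, ← map_natCast C]
  ring

end CommSemiring

section Eigenvector

variable [CommRing R] [IsDomain R] {w : σ → M}
  {D : Derivation R (MvPolynomial σ R) (MvPolynomial σ R)} {f g : MvPolynomial σ R}

theorem weight_le_zero_of_derivation_eq_mul [AddCommMonoid M] [LinearOrder M]
    [IsOrderedCancelAddMonoid M] (hD : ∀ i, IsWeightedHomogeneous w (D (X i)) (w i))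
    (hf : f ≠ 0) (h : D f = g * f) : ∀ d ∈ g.support, Finsupp.weight w d ≤ 0 := by
  classical
  intro d₀ hd₀
  have hfs := support_nonempty.2 hf
  have hgs : g.support.Nonempty := ⟨d₀, hd₀⟩
  obtain ⟨a, ha, ham⟩ := exists_mem_eq_sup' hfs (Finsupp.weight w)
  obtain ⟨b, hb, hbn⟩ := exists_mem_eq_sup' hgs (Finsupp.weight w)
  set m := f.support.sup' hfs (Finsupp.weight w)
  set n := g.support.sup' hgs (Finsupp.weight w)
  have htop : weightedHomogeneousComponent w (n + m) f ≠ 0 := by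
    intro h0
    have hmul := weightedHomogeneousComponent_mul_of_le (w := w) (φ := g) (ψ := f) (m := n)
      (n := m) (fun d hd => le_sup'_of_le _ hd le_rfl) (fun d hd => le_sup'_of_le _ hd le_rfl)
    rw [← h, weightedHomogeneousComponent_derivation hD, h0, map_zero, hbn, ham] at hmul
    exact mul_ne_zero (weightedHomogeneousComponent_weight_ne_zero hb)
      (weightedHomogeneousComponent_weight_ne_zero ha) hmul.symm
  obtain ⟨c, hc⟩ := ne_zero_iff.1 htop
  rw [coeff_weightedHomogeneousComponent] at hc
  split_ifs at hc with hcw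
  swap
  · exact (hc rfl).elim
  have hnm : n + m ≤ m := hcw ▸ le_sup' (Finsupp.weight w) (mem_support_iff.2 hc)
  exact (le_sup' (Finsupp.weight w) hd₀).trans (add_le_iff_nonpos_left.1 hnm)

theorem isWeightedHomogeneous_zero_of_derivation_eq_mul [AddCommGroup M] [LinearOrder M]
    [IsOrderedAddMonoid M] (hD : ∀ i, IsWeightedHomogeneous w (D (X i)) (w i))
    (hf : f ≠ 0) (h : D f = g * f) : IsWeightedHomogeneous w g 0 := by
  have hneg : ∀ d : σ →₀ ℕ, Finsupp.weight (-w) d = -Finsupp.weight w d := fun d => by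
    simp [Finsupp.weight_apply, Finsupp.sum]
  intro d hd
  refine le_antisymm (weight_le_zero_of_derivation_eq_mul hD hf h d (mem_support_iff.2 hd)) ?_
  have := weight_le_zero_of_derivation_eq_mul (w := -w)
    (fun i e he => by rw [hneg, hD i he, Pi.neg_apply]) hf h d (mem_support_iff.2 hd)
  rwa [hneg, neg_nonpos] at this

end Eigenvector

theorem not_isUnit_X [CommRing R] [IsReduced R] [Nontrivial R] (i : σ) :
    ¬IsUnit (X i : MvPolynomial σ R) := fun h => by
  simpa using (isUnit_iff_totalDegree_of_isReduced.1 h).2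

theorem _root_.Irreducible.exists_eq_C_mul_of_dvd [Field R] {f a : MvPolynomial σ R}
    (hf : Irreducible f) (ha : ¬IsUnit a) (h : a ∣ f) : ∃ c : R, f = C c * a := by
  obtain ⟨g, rfl⟩ := h
  obtain ⟨c, -, rfl⟩ :=
    isUnit_iff_eq_C_of_isReduced.1 ((hf.isUnit_or_isUnit rfl).resolve_left ha)
  exact ⟨c, mul_comm _ _⟩

end MvPolynomial

theorem Polynomial.exists_eq_C_mul_X_sub_C_of_irreducible {K : Type*} [Field K] [IsAlgClosed K]
    {P : K[X]} (hP : Irreducible P) :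
    ∃ c r : K, c ≠ 0 ∧ P = Polynomial.C c * (Polynomial.X - Polynomial.C r) := by
  have hc : P.leadingCoeff ≠ 0 := Polynomial.leadingCoeff_ne_zero.2 hP.ne_zero
  refine ⟨P.leadingCoeff, -P.coeff 0 / P.leadingCoeff, hc, ?_⟩
  conv_lhs => rw [Polynomial.eq_X_add_C_of_degree_eq_one
    (IsAlgClosed.degree_eq_one_of_irreducible K hP)]
  rw [mul_sub, ← Polynomial.C_mul, mul_div_cancel₀ _ hc]
  simp

theorem nsmul_add_nsmul_injective {G : Type*} [AddCommGroup G] {a b : G} {p q : ℕ}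
    (hp : p ≠ 0) (hq : q ≠ 0) (hab : ∀ m n : ℤ, m • a + n • b = 0 → m = 0 ∧ n = 0) :
    Function.Injective fun e : Fin 2 →₀ ℕ => e 0 • p • a + e 1 • q • b := by
  intro e e' (h : e 0 • p • a + e 1 • q • b = e' 0 • p • a + e' 1 • q • b)
  obtain ⟨h0, h1⟩ := hab ((e 0 - e' 0) * p) ((e 1 - e' 1) * q) (by
    simp only [mul_smul, sub_smul, natCast_zsmul]
    rw [sub_add_sub_comm, h, sub_self])
  ext i
  fin_cases i
  · simpa [hp, sub_eq_zero] using h0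
  · simpa [hq, sub_eq_zero] using h1

noncomputable section

def tExp (p q : ℕ) : Fin 2 →₀ ℕ := Finsupp.single 0 q + Finsupp.single 1 p

def tWeight (p q : ℕ) : Fin 2 → ℤ := ![-(p : ℤ), q]

def tMonomial (k : Type*) [CommSemiring k] (p q : ℕ) : MvPolynomial (Fin 2) k :=
  monomial (tExp p q) 1

end

section TMonomial

variable {k : Type*} {p q : ℕ}

@[simp] theorem tExp_apply_zero : tExp p q 0 = q := by simp [tExp]

@[simp] theorem tExp_apply_one : tExp p q 1 = p := by simp [tExp]

theorem weight_tWeight (d : Fin 2 →₀ ℕ) :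
    Finsupp.weight (tWeight p q) d = q * d 1 - p * d 0 := by
  simp [Finsupp.weight_eq_sum, tWeight, sub_eq_neg_add, mul_comm]

theorem weight_tWeight_tExp : Finsupp.weight (tWeight p q) (tExp p q) = 0 := by
  simp [weight_tWeight, mul_comm]

theorem smul_tExp_injective (hq : 0 < q) : Function.Injective fun i : ℕ => i • tExp p q :=
  fun i j h => by simpa [hq.ne'] using DFunLike.congr_fun h 0

theorem exists_eq_add_smul_tExp (hq : 0 < q) (hpq : p.Coprime q) {d e : Fin 2 →₀ ℕ}
    (hw : Finsupp.weight (tWeight p q) d = Finsupp.weight (tWeight p q) e) (h0 : e 0 ≤ d 0) :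
    ∃ i : ℕ, d = e + i • tExp p q := by
  obtain ⟨j, hj⟩ := Nat.exists_eq_add_of_le h0
  rw [weight_tWeight, weight_tWeight, hj] at hw
  have h1 : q * d 1 = q * e 1 + p * j := by
    push_cast at hw
    linarith
  obtain ⟨i, rfl⟩ : q ∣ j := hpq.symm.dvd_of_dvd_mul_left ⟨d 1 - e 1, by
    rw [Nat.mul_sub, h1]
    omega⟩
  refine ⟨i, Finsupp.ext fun a => ?_⟩
  fin_cases a
  · simp [hj, mul_comm]
  · have : d 1 = e 1 + p * i := by
      apply Nat.eq_of_mul_eq_mul_left hq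
      rw [h1]
      ring
    simp [this, mul_comm]

variable [CommSemiring k]

theorem tMonomial_eq : tMonomial k p q = X 0 ^ q * X 1 ^ p := by
  rw [tMonomial, tExp, X_pow_eq_monomial, X_pow_eq_monomial, monomial_mul, one_mul]

theorem aeval_tMonomial_monomial (n : ℕ) (a : k) :
    Polynomial.aeval (tMonomial k p q) (Polynomial.monomial n a) =
      monomial (n • tExp p q) a := by
  rw [Polynomial.aeval_monomial, tMonomial, monomial_pow, one_pow, algebraMap_eq,
    C_mul_monomial, mul_one]

theorem isWeightedHomogeneous_aeval_tMonomial (P : k[X]) :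
    IsWeightedHomogeneous (tWeight p q) (Polynomial.aeval (tMonomial k p q) P) 0 := by
  induction P using Polynomial.induction_on' with
  | add P Q hP hQ => simpa using hP.add hQ
  | monomial n a =>
    rw [aeval_tMonomial_monomial]
    exact isWeightedHomogeneous_monomial _ _ _ (by simp [weight_tWeight_tExp])

theorem coeff_smul_tExp_aeval_tMonomial (hq : 0 < q) (P : k[X]) (i : ℕ) :
    coeff (i • tExp p q) (Polynomial.aeval (tMonomial k p q) P) = P.coeff i := by
  classical
  induction P using Polynomial.induction_on' with
  | add P Q hP hQ => simp [hP, hQ]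
  | monomial n a =>
    rw [aeval_tMonomial_monomial, coeff_monomial, Polynomial.coeff_monomial]
    exact if_congr (smul_tExp_injective hq).eq_iff rfl rfl

theorem aeval_tMonomial_injective (hq : 0 < q) :
    Function.Injective (Polynomial.aeval (R := k) (tMonomial k p q)) := fun P Q h =>
  Polynomial.ext fun i => by
    rw [← coeff_smul_tExp_aeval_tMonomial hq, h, coeff_smul_tExp_aeval_tMonomial hq]

theorem exists_eq_monomial_mul_aeval_tMonomial {g : MvPolynomial (Fin 2) k} {e : Fin 2 →₀ ℕ}
    (h : ∀ d ∈ g.support, ∃ i : ℕ, d = e + i • tExp p q) :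
    ∃ P : k[X], g = monomial e 1 * Polynomial.aeval (tMonomial k p q) P := by
  choose! ι hι using h
  refine ⟨∑ d ∈ g.support, Polynomial.monomial (ι d) (coeff d g), ?_⟩
  conv_lhs => rw [← support_sum_monomial_coeff g]
  rw [map_sum, Finset.mul_sum]
  refine Finset.sum_congr rfl fun d hd => ?_
  rw [aeval_tMonomial_monomial, monomial_mul, one_mul, ← hι d hd]

theorem exists_eq_aeval_tMonomial_of_isWeightedHomogeneous_zero (hq : 0 < q)
    (hpq : p.Coprime q) {g : MvPolynomial (Fin 2) k}
    (hg : IsWeightedHomogeneous (tWeight p q) g 0) :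
    ∃ P : k[X], g = Polynomial.aeval (tMonomial k p q) P := by
  obtain ⟨P, hP⟩ := exists_eq_monomial_mul_aeval_tMonomial (e := 0) fun d hd =>
    exists_eq_add_smul_tExp hq hpq (by rw [hg (mem_support_iff.1 hd), map_zero]) (Nat.zero_le _)
  exact ⟨P, by rwa [← one_def, one_mul] at hP⟩

theorem exists_eq_monomial_mul_aeval_tMonomial_of_isWeightedHomogeneous (hq : 0 < q)
    (hpq : p.Coprime q) {g : MvPolynomial (Fin 2) k} {m : ℤ}
    (hg : IsWeightedHomogeneous (tWeight p q) g m) (hg0 : g ≠ 0) :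
    ∃ e ∈ g.support, ∃ P : k[X],
      P.coeff 0 ≠ 0 ∧ g = monomial e 1 * Polynomial.aeval (tMonomial k p q) P := by
  obtain ⟨e, he, hmin⟩ := g.support.exists_min_image (· 0) (support_nonempty.2 hg0)
  obtain ⟨P, hP⟩ := exists_eq_monomial_mul_aeval_tMonomial fun d hd =>
    exists_eq_add_smul_tExp hq hpq
      (by rw [hg (mem_support_iff.1 hd), hg (mem_support_iff.1 he)]) (hmin d hd)
  refine ⟨e, he, P, ?_, hP⟩
  have := coeff_monomial_mul (0 • tExp p q) e 1 (Polynomial.aeval (tMonomial k p q) P)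
  rw [coeff_smul_tExp_aeval_tMonomial hq, zero_smul, add_zero, ← hP, one_mul] at this
  rw [← this]
  exact mem_support_iff.1 he

theorem isLocalHom_aeval_tMonomial {K : Type*} [CommRing K] [IsDomain K] (hq : 0 < q) :
    IsLocalHom (Polynomial.aeval (R := K) (tMonomial K p q)) := by
  refine ⟨fun P hP => ?_⟩
  obtain ⟨c, hc, hPc⟩ := isUnit_iff_eq_C_of_isReduced.1 hP
  have hP' : P = Polynomial.C c :=
    aeval_tMonomial_injective hq (by rw [hPc, Polynomial.aeval_C, algebraMap_eq])
  exact hP' ▸ hc.map _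

end TMonomial

section Derivation

variable {k : Type*} {p q : ℕ}

section CommRing

variable [CommRing k] {α β : k[X]}
  {D : Derivation k (MvPolynomial (Fin 2) k) (MvPolynomial (Fin 2) k)}
  (hD0 : D (X 0) = X 0 * Polynomial.aeval (tMonomial k p q) α)
  (hD1 : D (X 1) = X 1 * Polynomial.aeval (tMonomial k p q) β)
include hD0 hD1

theorem derivation_monomial_eq (e : Fin 2 →₀ ℕ) (r : k) :
    D (monomial e r) =
      monomial e r * Polynomial.aeval (tMonomial k p q) (e 0 • α + e 1 • β) := by
  rw [derivation_monomial_of_eq_X_mul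
      (u := ![Polynomial.aeval (tMonomial k p q) α, Polynomial.aeval (tMonomial k p q) β])
      (Fin.forall_fin_two.2 ⟨hD0, hD1⟩),
    Finsupp.sum_fintype _ _ (by simp), Fin.sum_univ_two]
  simp

theorem derivation_tMonomial :
    D (tMonomial k p q) =
      Polynomial.aeval (tMonomial k p q) (Polynomial.X * (q • α + p • β)) := by
  rw [map_mul, Polynomial.aeval_X]
  conv_lhs => rw [tMonomial]
  rw [derivation_monomial_eq hD0 hD1, ← tMonomial]
  simp

theorem derivation_monomial_mul_aeval (e : Fin 2 →₀ ℕ) (P : k[X]) :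
    D (monomial e 1 * Polynomial.aeval (tMonomial k p q) P) =
      monomial e 1 * Polynomial.aeval (tMonomial k p q)
        ((e 0 • α + e 1 • β) * P +
          Polynomial.X * (q • α + p • β) * Polynomial.derivative P) := by
  rw [Derivation.leibniz, Derivation.map_aeval, derivation_tMonomial hD0 hD1,
    derivation_monomial_eq hD0 hD1]
  simp only [map_add, map_mul, smul_eq_mul]
  ring

theorem isWeightedHomogeneous_derivation_X (i : Fin 2) :
    IsWeightedHomogeneous (tWeight p q) (D (X i)) (tWeight p q i) := by
  fin_cases i
  · change IsWeightedHomogeneous _ (D (X 0)) _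
    rw [hD0]
    simpa using (isWeightedHomogeneous_X k (tWeight p q) 0).mul
      (isWeightedHomogeneous_aeval_tMonomial α)
  · change IsWeightedHomogeneous _ (D (X 1)) _
    rw [hD1]
    simpa using (isWeightedHomogeneous_X k (tWeight p q) 1).mul
      (isWeightedHomogeneous_aeval_tMonomial β)

variable [IsDomain k]

theorem eigen_equation_of_derivation_eq_mul (hq : 0 < q) {e : Fin 2 →₀ ℕ} {P Λ : k[X]}
    (h : D (monomial e 1 * Polynomial.aeval (tMonomial k p q) P) =
      Polynomial.aeval (tMonomial k p q) Λ *
        (monomial e 1 * Polynomial.aeval (tMonomial k p q) P)) :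
    (e 0 • α + e 1 • β) * P + Polynomial.X * (q • α + p • β) * Polynomial.derivative P =
      Λ * P := by
  rw [derivation_monomial_mul_aeval hD0 hD1, mul_left_comm, ← map_mul] at h
  exact aeval_tMonomial_injective hq (mul_left_cancel₀ (monomial_eq_zero.not.2 one_ne_zero) h)

theorem coeff_zero_eq_of_derivation_eq_mul (hq : 0 < q) {e : Fin 2 →₀ ℕ} {P Λ : k[X]}
    (hP : P.coeff 0 ≠ 0)
    (h : D (monomial e 1 * Polynomial.aeval (tMonomial k p q) P) =
      Polynomial.aeval (tMonomial k p q) Λ *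
        (monomial e 1 * Polynomial.aeval (tMonomial k p q) P)) :
    e 0 • α.coeff 0 + e 1 • β.coeff 0 = Λ.coeff 0 := by
  have := congrArg (Polynomial.eval 0) (eigen_equation_of_derivation_eq_mul hD0 hD1 hq h)
  simp only [Polynomial.eval_add, Polynomial.eval_mul, Polynomial.eval_X, zero_mul, add_zero,
    Polynomial.eval_smul, ← Polynomial.coeff_zero_eq_eval_zero] at this
  exact mul_right_cancel₀ hP this

theorem isWeightedHomogeneous_of_derivation_eq_mul (hq : 0 < q) (hpq : p.Coprime q)
    (hχ : Function.Injective fun e : Fin 2 →₀ ℕ => e 0 • α.coeff 0 + e 1 • β.coeff 0)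
    {f g : MvPolynomial (Fin 2) k} (hf : f ≠ 0) (h : D f = g * f) :
    ∃ m, IsWeightedHomogeneous (tWeight p q) f m := by
  have hDX := isWeightedHomogeneous_derivation_X hD0 hD1
  obtain ⟨Λ, rfl⟩ := exists_eq_aeval_tMonomial_of_isWeightedHomogeneous_zero hq hpq
    (isWeightedHomogeneous_zero_of_derivation_eq_mul hDX hf h)
  -- each nonzero weighted homogeneous component of `f` is an eigenvector `x^e P(t)`
  -- with `P(0) ≠ 0`, whose corner `e` is then determined by `Λ(0)`
  have corner : ∀ d ∈ f.support, ∃ e : Fin 2 →₀ ℕ, Finsupp.weight (tWeight p q) e =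
      Finsupp.weight (tWeight p q) d ∧ e 0 • α.coeff 0 + e 1 • β.coeff 0 = Λ.coeff 0 := by
    intro d hd
    have hc := weightedHomogeneousComponent_isWeightedHomogeneous
      (R := k) (w := tWeight p q) (Finsupp.weight (tWeight p q) d) f
    obtain ⟨e, he, P, hP0, hfe⟩ :=
      exists_eq_monomial_mul_aeval_tMonomial_of_isWeightedHomogeneous hq hpq hc
        (weightedHomogeneousComponent_weight_ne_zero hd)
    refine ⟨e, hc (mem_support_iff.1 he), coeff_zero_eq_of_derivation_eq_mul hD0 hD1 hq hP0 ?_⟩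
    rw [← hfe, ← weightedHomogeneousComponent_derivation hDX, h,
      (isWeightedHomogeneous_aeval_tMonomial Λ).weightedHomogeneousComponent_mul]
  obtain ⟨d₀, hd₀⟩ := support_nonempty.2 hf
  obtain ⟨e₀, he₀, hΛ₀⟩ := corner d₀ hd₀
  refine ⟨Finsupp.weight (tWeight p q) d₀, fun d hd => ?_⟩
  obtain ⟨e, he, hΛ⟩ := corner d (mem_support_iff.2 hd)
  rw [← he, ← he₀, hχ (hΛ.trans hΛ₀.symm)]

end CommRing

variable [Field k] [IsAlgClosed k] {α β : k[X]}
  {D : Derivation k (MvPolynomial (Fin 2) k) (MvPolynomial (Fin 2) k)}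
  (hD0 : D (X 0) = X 0 * Polynomial.aeval (tMonomial k p q) α)
  (hD1 : D (X 1) = X 1 * Polynomial.aeval (tMonomial k p q) β)
include hD0 hD1

theorem exists_eq_C_mul_of_irreducible_of_derivation_eq_mul (hq : 0 < q) (hpq : p.Coprime q)
    (hχ : Function.Injective fun e : Fin 2 →₀ ℕ => e 0 • α.coeff 0 + e 1 • β.coeff 0)
    {f g : MvPolynomial (Fin 2) k} (hf : Irreducible f) (h : D f = g * f) :
    ∃ c : k, f = C c * X 0 ∨ f = C c * X 1 ∨
      ∃ r, (q • α + p • β).IsRoot r ∧ f = C c * (tMonomial k p q - C r) := by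
  obtain ⟨m, hm⟩ := isWeightedHomogeneous_of_derivation_eq_mul hD0 hD1 hq hpq hχ hf.ne_zero h
  obtain ⟨e, -, P, hP0, hfe⟩ :=
    exists_eq_monomial_mul_aeval_tMonomial_of_isWeightedHomogeneous hq hpq hm hf.ne_zero
  have hX : ∀ i, e i ≠ 0 → ∃ c : k, f = C c * X i := fun i hi =>
    hf.exists_eq_C_mul_of_dvd (not_isUnit_X i)
      (hfe ▸ dvd_mul_of_dvd_left (X_dvd_monomial.2 (.inr hi)) _)
  by_cases h0 : e 0 ≠ 0
  · obtain ⟨c, hc⟩ := hX 0 h0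
    exact ⟨c, .inl hc⟩
  by_cases h1 : e 1 ≠ 0
  · obtain ⟨c, hc⟩ := hX 1 h1
    exact ⟨c, .inr (.inl hc)⟩
  obtain rfl : e = 0 := Finsupp.ext (Fin.forall_fin_two.2 ⟨not_not.1 h0, not_not.1 h1⟩)
  rw [← one_def, one_mul] at hfe
  have := isLocalHom_aeval_tMonomial (K := k) (p := p) hq
  obtain ⟨c, r, hc, rfl⟩ :=
    Polynomial.exists_eq_C_mul_X_sub_C_of_irreducible (hfe ▸ hf).of_map
  obtain ⟨Λ, rfl⟩ := exists_eq_aeval_tMonomial_of_isWeightedHomogeneous_zero hq hpq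
    (isWeightedHomogeneous_zero_of_derivation_eq_mul
      (isWeightedHomogeneous_derivation_X hD0 hD1) hf.ne_zero h)
  have heq := eigen_equation_of_derivation_eq_mul hD0 hD1 hq (e := 0) (Λ := Λ)
    (by rw [← one_def, one_mul, ← hfe, h])
  have hr : r ≠ 0 := by
    rintro rfl
    simp at hP0
  refine ⟨c, .inr (.inr ⟨r, ?_, by rw [hfe]; simp⟩)⟩
  simpa [hr, hc] using congrArg (Polynomial.eval r) heq

end Derivation

theorem aeval_tMonomial_sum {k : Type*} [CommSemiring k] (p q ℓ : ℕ) (E : ℕ → k) :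
    Polynomial.aeval (tMonomial k p q)
        (∑ i ∈ range (ℓ + 1), Polynomial.C (E i) * Polynomial.X ^ i) =
      ∑ i ∈ range (ℓ + 1), C (E i) * X 0 ^ (q * i) * X 1 ^ (p * i) := by
  simp [tMonomial_eq, mul_pow, pow_mul, mul_assoc]

theorem finitely_many_eigenvectors_general {k : Type*} [Field k] [CharZero k] [IsAlgClosed k]
    (p q ℓ : ℕ) (hp : 1 ≤ p) (hq : 1 ≤ q) (hpq : Nat.Coprime p q)
    (A B : ℕ → k)
    (hindep : ∀ m n : ℤ, m • A 0 + n • B 0 = 0 → m = 0 ∧ n = 0)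
    (D : Derivation k (MvPolynomial (Fin 2) k) (MvPolynomial (Fin 2) k))
    (hD : ∀ f, D f =
      (p : MvPolynomial (Fin 2) k) * X 0 *
        (∑ i ∈ Finset.range (ℓ + 1), C (A i) * X 0 ^ (q * i) * X 1 ^ (p * i)) *
          pderiv (0 : Fin 2) f +
      (q : MvPolynomial (Fin 2) k) * X 1 *
        (∑ i ∈ Finset.range (ℓ + 1), C (B i) * X 0 ^ (q * i) * X 1 ^ (p * i)) *
          pderiv (1 : Fin 2) f) :
    ∃ S : Finset (MvPolynomial (Fin 2) k),
      ∀ f : MvPolynomial (Fin 2) k, Irreducible f → (∃ lam, D f = lam * f) →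
        ∃ g ∈ S, ∃ c : k, f = C c * g := by
  classical
  set a := ∑ i ∈ range (ℓ + 1), Polynomial.C (A i) * Polynomial.X ^ i
  set b := ∑ i ∈ range (ℓ + 1), Polynomial.C (B i) * Polynomial.X ^ i
  have hD0 : D (X 0) = X 0 * Polynomial.aeval (tMonomial k p q) (p • a) := by
    rw [hD, pderiv_X_self, pderiv_X_of_ne zero_ne_one, map_nsmul, aeval_tMonomial_sum,
      nsmul_eq_mul]
    ring
  have hD1 : D (X 1) = X 1 * Polynomial.aeval (tMonomial k p q) (q • b) := by
    rw [hD, pderiv_X_self, pderiv_X_of_ne one_ne_zero, map_nsmul, aeval_tMonomial_sum,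
      nsmul_eq_mul]
    ring
  have hχ : Function.Injective fun e : Fin 2 →₀ ℕ =>
      e 0 • (p • a).coeff 0 + e 1 • (q • b).coeff 0 := by
    simpa [a, b] using nsmul_add_nsmul_injective (by omega) (by omega) hindep
  have hR : q • p • a + p • q • b ≠ 0 := by
    rw [smul_comm q p a, ← smul_add, ← smul_add]
    refine smul_ne_zero (by omega) (smul_ne_zero (by omega) fun hab => ?_)
    simpa using hindep 1 1 (by simpa [a, b] using congrArg (Polynomial.coeff · 0) hab)
  refine ⟨{X 0, X 1} ∪ (q • p • a + p • q • b).roots.toFinset.image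
    (fun r => tMonomial k p q - C r), ?_⟩
  rintro f hf ⟨g, hg⟩
  obtain ⟨c, hc | hc | ⟨r, hr, hc⟩⟩ :=
    exists_eq_C_mul_of_irreducible_of_derivation_eq_mul hD0 hD1 hq hpq hχ hf hg
  · exact ⟨X 0, by simp, c, hc⟩
  · exact ⟨X 1, by simp, c, hc⟩
  · exact ⟨_, mem_union_right _ (mem_image_of_mem _
      (Multiset.mem_toFinset.2 (Polynomial.mem_roots'.2 ⟨hR, hr⟩))), c, hc⟩

/-- For `D = p·x·a₁·∂x + q·y·b₁·∂y` with `a₁ = Σ aᵢᵢ x^{qi} y^{pi}`,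
`b₁ = Σ bᵢᵢ x^{qi} y^{pi}`, `q·a_ℓℓ + p·b_ℓℓ ≠ 0`: if `{a₀₀, b₀₀}` is linearly
independent over `ℚ`, then `D` has only finitely many irreducible eigenvectors up to
scalar multiples. -/
theorem finitely_many_eigenvectors {k : Type*} [Field k] [CharZero k] [IsAlgClosed k]
    (p q ℓ : ℕ) (hp : 1 ≤ p) (hq : 1 ≤ q) (hℓ : 1 ≤ ℓ) (hpq : Nat.Coprime p q)
    (A B : ℕ → k)
    (hlead : (q : k) * A ℓ + (p : k) * B ℓ ≠ 0)
    (hindep : ∀ m n : ℤ, m • A 0 + n • B 0 = 0 → m = 0 ∧ n = 0)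
    (D : Derivation k (MvPolynomial (Fin 2) k) (MvPolynomial (Fin 2) k))
    (hD : ∀ f, D f =
      (p : MvPolynomial (Fin 2) k) * X 0 *
        (∑ i ∈ Finset.range (ℓ + 1), C (A i) * X 0 ^ (q * i) * X 1 ^ (p * i)) *
          pderiv (0 : Fin 2) f +
      (q : MvPolynomial (Fin 2) k) * X 1 *
        (∑ i ∈ Finset.range (ℓ + 1), C (B i) * X 0 ^ (q * i) * X 1 ^ (p * i)) *
          pderiv (1 : Fin 2) f) :
    ∃ S : Finset (MvPolynomial (Fin 2) k),
      ∀ f : MvPolynomial (Fin 2) k, Irreducible f → (∃ lam, D f = lam * f) →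
        ∃ g ∈ S, ∃ c : k, f = C c * g :=
  finitely_many_eigenvectors_general p q ℓ hp hq hpq A B hindep D hD
end

section
/- Let k be an algebraically closed field of characteristic zero, p, q ≥ 1 integers, c ∈ k*, and let D = a·∂x + b·∂y be a derivation of k[x,y] with D(x^q − c·y^p) = 0. Then there exists g ∈ k[x,y] such that a = c·p·y^{p−1}·g and b = q·x^{q−1}·g; equivalently, D = g·(c·p·y^{p−1}·∂x + q·x^{q−1}·∂y). -/
/-!
`D` kills `f = x^q - c y^p` exactly when `a ∂ₓf = -b ∂ᵧf`, i.e. `a · q x^(q-1) = b · c p y^(p-1)`.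
Up to units the two partials are powers of the distinct primes `x` and `y`, hence coprime in the
factorial ring `k[x,y]`; so `c p y^(p-1)` divides `a`, and the cofactor is the required `g`.
-/

open MvPolynomial

theorem exists_eq_mul_of_mul_eq_mul_of_isRelPrime {R : Type*} [CommMonoidWithZero R]
    [IsCancelMulZero R] [DecompositionMonoid R] {a b u v : R} (huv : IsRelPrime u v) (hv : v ≠ 0)
    (h : a * u = b * v) : ∃ g, a = v * g ∧ b = u * g := by
  obtain ⟨g, rfl⟩ : v ∣ a := huv.symm.dvd_of_dvd_mul_right ⟨b, by rw [h, mul_comm]⟩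
  refine ⟨g, rfl, mul_left_cancel₀ hv ?_⟩
  rw [mul_comm v b, ← h]
  ac_rfl

theorem MvPolynomial.isRelPrime_C_mul_X_pow {σ K : Type*} [Field K] {i j : σ}
    (hij : i ≠ j) {α β : K} (hα : α ≠ 0) (hβ : β ≠ 0) (m n : ℕ) :
    IsRelPrime (C α * X i ^ m) (C β * X j ^ n) := by
  rw [isRelPrime_mul_unit_left_left (hα.isUnit.map C),
    isRelPrime_mul_unit_left_right (hβ.isUnit.map C)]
  exact ((X_prime.irreducible.isRelPrime_iff_not_dvd).mpr (by simpa using hij)).pow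

theorem derivation_killing_xq_sub_cyp_general {k : Type*} [Field k] [CharZero k]
    (p q : ℕ) (hp : 1 ≤ p) (hq : 1 ≤ q) (c : k) (hc : c ≠ 0)
    (a b : MvPolynomial (Fin 2) k)
    (D : Derivation k (MvPolynomial (Fin 2) k) (MvPolynomial (Fin 2) k))
    (hD : ∀ f, D f = a * pderiv (0 : Fin 2) f + b * pderiv (1 : Fin 2) f)
    (h : D (X 0 ^ q - C c * X 1 ^ p) = 0) :
    ∃ g : MvPolynomial (Fin 2) k,
      a = C c * (p : MvPolynomial (Fin 2) k) * X 1 ^ (p - 1) * g ∧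
      b = (q : MvPolynomial (Fin 2) k) * X 0 ^ (q - 1) * g := by
  set u : MvPolynomial (Fin 2) k := (q : MvPolynomial (Fin 2) k) * X 0 ^ (q - 1)
  set v : MvPolynomial (Fin 2) k := C c * (p : MvPolynomial (Fin 2) k) * X 1 ^ (p - 1)
  have hcross : a * u = b * v := by
    have h0 : pderiv 0 (X 0 ^ q - C c * X 1 ^ p) = u := by simp [u]
    have h1 : pderiv 1 (X 0 ^ q - C c * X 1 ^ p) = -v := by simp [v]; ring
    rw [hD, h0, h1] at h
    linear_combination h
  have hq0 : (q : k) ≠ 0 := Nat.cast_ne_zero.mpr (by omega)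
  have hcp0 : c * p ≠ 0 := mul_ne_zero hc (Nat.cast_ne_zero.mpr (by omega))
  have hu : u = C (q : k) * X 0 ^ (q - 1) := by rw [map_natCast]
  have hv : v = C (c * p) * X 1 ^ (p - 1) := by rw [C_mul, map_natCast]
  have huv : IsRelPrime u v := by
    rw [hu, hv]
    exact isRelPrime_C_mul_X_pow (by decide) hq0 hcp0 _ _
  have hv0 : v ≠ 0 := hv ▸ mul_ne_zero (C_ne_zero.mpr hcp0) (pow_ne_zero _ (X_ne_zero 1))
  exact exists_eq_mul_of_mul_eq_mul_of_isRelPrime huv hv0 hcross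

/-- If a derivation `D = a·∂x + b·∂y` of `k[x,y]` annihilates `x^q − c·y^p` (`c ≠ 0`),
then `D = g·(c·p·y^{p−1}·∂x + q·x^{q−1}·∂y)` for some `g ∈ k[x,y]`. -/
theorem derivation_killing_xq_sub_cyp {k : Type*} [Field k] [CharZero k] [IsAlgClosed k]
    (p q : ℕ) (hp : 1 ≤ p) (hq : 1 ≤ q) (c : k) (hc : c ≠ 0)
    (a b : MvPolynomial (Fin 2) k)
    (D : Derivation k (MvPolynomial (Fin 2) k) (MvPolynomial (Fin 2) k))
    (hD : ∀ f, D f = a * pderiv (0 : Fin 2) f + b * pderiv (1 : Fin 2) f)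
    (h : D (X 0 ^ q - C c * X 1 ^ p) = 0) :
    ∃ g : MvPolynomial (Fin 2) k,
      a = C c * (p : MvPolynomial (Fin 2) k) * X 1 ^ (p - 1) * g ∧
      b = (q : MvPolynomial (Fin 2) k) * X 0 ^ (q - 1) * g :=
  derivation_killing_xq_sub_cyp_general p q hp hq c hc a b D hD h
end

section
/- Let k be an algebraically closed field of characteristic zero, p, q ≥ 1 integers, c ∈ k*, and let D = a·∂x + b·∂y be a derivation of k[x,y] with D(x^q·y^p − c) = 0. Then there exists g ∈ k[x,y] such that a = p·x·g and b = −q·y·g; equivalently, D = g·(p·x·∂x − q·y·∂y). -/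
/-!
Write `f = x^q y^p`. Euler's identities `x ∂ₓf = q f` and `y ∂ᵧf = p f` turn
`x y · D f = 0` into `(q y a + p x b) f = 0`, hence `q a · y = -p b · x`.
Since `x` and `y` are non-associate primes, `q a = x w` and `-p b = y w` for a common `w`,
and `g = w / (p q)`.
-/

open MvPolynomial

namespace MvPolynomial

variable {σ R : Type*}

theorem exists_eq_X_mul_of_X_mul_eq_X_mul [CommRing R] [IsDomain R] {i j : σ} (hij : i ≠ j)
    {u v : MvPolynomial σ R} (h : X j * u = X i * v) :
    ∃ w, u = X i * w ∧ v = X j * w := by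
  have hdvd : (X i : MvPolynomial σ R) ∣ X j * u := ⟨v, h⟩
  obtain ⟨w, rfl⟩ : (X i : MvPolynomial σ R) ∣ u :=
    (X_dvd_mul_iff.mp hdvd).resolve_left (by simpa using hij)
  refine ⟨w, rfl, ?_⟩
  rw [mul_left_comm, X_mul_cancel_left_iff] at h
  exact h.symm

theorem X_mul_pderiv_X_pow_mul_X_pow [CommSemiring R] [DecidableEq σ] {i j : σ} (hij : i ≠ j)
    (m n : ℕ) :
    X i * pderiv i (X i ^ m * X j ^ n : MvPolynomial σ R) =
      (m : MvPolynomial σ R) * (X i ^ m * X j ^ n) := by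
  have hmono : (X i ^ m * X j ^ n : MvPolynomial σ R) =
      monomial (Finsupp.single i m + Finsupp.single j n) 1 := by
    simp [X_pow_eq_monomial, monomial_mul]
  rw [hmono, X_mul_pderiv_monomial, nsmul_eq_mul]
  simp [hij.symm]

theorem exists_of_mul_pderiv_add_mul_pderiv_X_pow_mul_X_pow [Field R] {i j : σ} (hij : i ≠ j)
    {m n : ℕ} (hm : (m : R) ≠ 0) (hn : (n : R) ≠ 0) {a b : MvPolynomial σ R}
    (h : a * pderiv i (X i ^ m * X j ^ n) + b * pderiv j (X i ^ m * X j ^ n) = 0) :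
    ∃ g, a = (n : MvPolynomial σ R) * X i * g ∧ b = -((m : MvPolynomial σ R) * X j * g) := by
  classical
  have hf : (X i ^ m * X j ^ n : MvPolynomial σ R) ≠ 0 :=
    mul_ne_zero (pow_ne_zero _ (X_ne_zero _)) (pow_ne_zero _ (X_ne_zero _))
  have hi := X_mul_pderiv_X_pow_mul_X_pow (R := R) hij m n
  have hj := X_mul_pderiv_X_pow_mul_X_pow (R := R) hij.symm n m
  rw [mul_comm (X j ^ n)] at hj
  have hlin : (X j * ((m : MvPolynomial σ R) * a) + X i * ((n : MvPolynomial σ R) * b)) *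
      (X i ^ m * X j ^ n) = 0 := by
    linear_combination X i * X j * h - X j * a * hi - X i * b * hj
  obtain ⟨w, hwa, hwb⟩ := exists_eq_X_mul_of_X_mul_eq_X_mul hij
    (u := (m : MvPolynomial σ R) * a) (v := -((n : MvPolynomial σ R) * b))
    (by linear_combination (mul_eq_zero.mp hlin).resolve_right hf)
  have hm' : (m : MvPolynomial σ R) * C (m : R)⁻¹ = 1 := by
    rw [← map_natCast C, ← C_mul, mul_inv_cancel₀ hm, C_1]
  have hn' : (n : MvPolynomial σ R) * C (n : R)⁻¹ = 1 := by
    rw [← map_natCast C, ← C_mul, mul_inv_cancel₀ hn, C_1]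
  refine ⟨C (m : R)⁻¹ * C (n : R)⁻¹ * w, ?_, ?_⟩
  · linear_combination C (m : R)⁻¹ * hwa - (C (m : R)⁻¹ * X i * w) * hn' - a * hm'
  · linear_combination (C (n : R)⁻¹ * X j * w) * hm' - C (n : R)⁻¹ * hwb - b * hn'

end MvPolynomial

theorem derivation_killing_xqyp_sub_c_general {k : Type*} [Field k] [CharZero k]
    (p q : ℕ) (hp : 1 ≤ p) (hq : 1 ≤ q) (c : k)
    (a b : MvPolynomial (Fin 2) k)
    (D : Derivation k (MvPolynomial (Fin 2) k) (MvPolynomial (Fin 2) k))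
    (hD : ∀ f, D f = a * pderiv (0 : Fin 2) f + b * pderiv (1 : Fin 2) f)
    (h : D (X 0 ^ q * X 1 ^ p - C c) = 0) :
    ∃ g : MvPolynomial (Fin 2) k,
      a = (p : MvPolynomial (Fin 2) k) * X 0 * g ∧
      b = -((q : MvPolynomial (Fin 2) k) * X 1 * g) := by
  rw [hD, map_sub, map_sub, pderiv_C, pderiv_C, sub_zero, sub_zero] at h
  exact exists_of_mul_pderiv_add_mul_pderiv_X_pow_mul_X_pow (by decide)
    (Nat.cast_ne_zero.mpr (by omega)) (Nat.cast_ne_zero.mpr (by omega)) h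

/-- If a derivation `D = a·∂x + b·∂y` of `k[x,y]` annihilates `x^q·y^p − c` (`c ≠ 0`),
then `D = g·(p·x·∂x − q·y·∂y)` for some `g ∈ k[x,y]`. -/
theorem derivation_killing_xqyp_sub_c {k : Type*} [Field k] [CharZero k] [IsAlgClosed k]
    (p q : ℕ) (hp : 1 ≤ p) (hq : 1 ≤ q) (c : k) (hc : c ≠ 0)
    (a b : MvPolynomial (Fin 2) k)
    (D : Derivation k (MvPolynomial (Fin 2) k) (MvPolynomial (Fin 2) k))
    (hD : ∀ f, D f = a * pderiv (0 : Fin 2) f + b * pderiv (1 : Fin 2) f)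
    (h : D (X 0 ^ q * X 1 ^ p - C c) = 0) :
    ∃ g : MvPolynomial (Fin 2) k,
      a = (p : MvPolynomial (Fin 2) k) * X 0 * g ∧
      b = -((q : MvPolynomial (Fin 2) k) * X 1 * g) :=
  derivation_killing_xqyp_sub_c_general p q hp hq c a b D hD h
end

section
/- Let k be an algebraically closed field of characteristic zero. Let D₁ = a₁·∂x + b₁·∂y be an irreducible derivation of k[x,y] (a₁ and b₁ have no nonconstant common divisor), let g ∈ k[x,y] be nonconstant, and suppose the derivation D = g·D₁ is nonzero. Then every k-algebra automorphism ρ of k[x,y] commuting with D satisfies: (i) there exists γ ∈ k* with ρ(g) = γ·g, and (ii) there exists λ ∈ k* such that ρ(D₁(f)) = λ·D₁(ρ(f)) for all f ∈ k[x,y]. -/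
open MvPolynomial

/-- In a UFD, if no prime divides both `a` and `b` (with `a ≠ 0`), then anything dividing
both `g * a` and `g * b` divides `g`. -/
private lemma dvd_of_dvd_mul_coprime {R : Type*} [CommRing R] [IsDomain R]
    [UniqueFactorizationMonoid R] {a b : R} (ha : a ≠ 0)
    (hab : ∀ p : R, Prime p → p ∣ a → p ∣ b → False) :
    ∀ u g : R, u ∣ g * a → u ∣ g * b → u ∣ g := by
  intro u
  induction u using UniqueFactorizationMonoid.induction_on_prime with
  | h₁ =>
    intro g h1 _
    have : g * a = 0 := zero_dvd_iff.mp h1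
    rcases mul_eq_zero.mp this with h | h
    · simp [h]
    · exact absurd h ha
  | h₂ x hx => exact fun g _ _ => hx.dvd
  | h₃ q p hq hp IH =>
    intro g h1 h2
    have hpg : p ∣ g := by
      rcases hp.dvd_mul.mp (dvd_trans (dvd_mul_right p q) h1) with h | h
      · exact h
      rcases hp.dvd_mul.mp (dvd_trans (dvd_mul_right p q) h2) with h' | h'
      · exact h'
      · exact absurd h' (fun h'' => hab p hp h h'')
    obtain ⟨g', rfl⟩ := hpg
    have hp0 : p ≠ 0 := hp.ne_zero
    have h1' : q ∣ g' * a := by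
      have : p * q ∣ p * (g' * a) := by rwa [← mul_assoc]
      exact (mul_dvd_mul_iff_left hp0).mp this
    have h2' : q ∣ g' * b := by
      have : p * q ∣ p * (g' * b) := by rwa [← mul_assoc]
      exact (mul_dvd_mul_iff_left hp0).mp this
    exact mul_dvd_mul_left p (IH g' h1' h2')

/-- A unit in a multivariate polynomial ring over a field is a constant. -/
private lemma unit_eq_C {k : Type*} [Field k] :
    ∀ (n : ℕ) (p : MvPolynomial (Fin n) k), IsUnit p → ∃ c : k, p = C c := by
  intro n
  induction n with
  | zero =>
    intro p _
    exact ⟨constantCoeff p, (eq_C_of_isEmpty p)⟩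
  | succ n IH =>
    intro p hp
    have hp' : IsUnit (finSuccEquiv k n p) := hp.map (finSuccEquiv k n)
    obtain ⟨r, hr, hrp⟩ := Polynomial.isUnit_iff.mp hp'
    obtain ⟨c, rfl⟩ := IH r hr
    refine ⟨c, ?_⟩
    have : Polynomial.C (C c : MvPolynomial (Fin n) k) =
        algebraMap k (Polynomial (MvPolynomial (Fin n) k)) c := by
      rw [Polynomial.algebraMap_apply]
      rfl
    have h2 : finSuccEquiv k n p = algebraMap k _ c := by rw [← hrp, this]
    have := congrArg (finSuccEquiv k n).symm h2
    rwa [AlgEquiv.symm_apply_apply, AlgEquiv.commutes] at this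

/-- If `D = g·D₁` with `D₁ = a₁·∂x + b₁·∂y` irreducible, `g` nonconstant and `D ≠ 0`,
then every automorphism `ρ` commuting with `D` sends `g` to a scalar multiple of itself
and semi-commutes with `D₁` up to a nonzero scalar. -/
theorem isotropy_of_reducible_derivation {k : Type*} [Field k] [CharZero k]
    [IsAlgClosed k]
    (a₁ b₁ g : MvPolynomial (Fin 2) k)
    (hirr : ∀ p : MvPolynomial (Fin 2) k, p ∣ a₁ → p ∣ b₁ → IsUnit p)
    (hg : g.totalDegree ≠ 0)
    (D₁ D : Derivation k (MvPolynomial (Fin 2) k) (MvPolynomial (Fin 2) k))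
    (hD₁ : ∀ f, D₁ f = a₁ * pderiv (0 : Fin 2) f + b₁ * pderiv (1 : Fin 2) f)
    (hD : ∀ f, D f = g * D₁ f)
    (hDne : D ≠ 0)
    (ρ : MvPolynomial (Fin 2) k ≃ₐ[k] MvPolynomial (Fin 2) k)
    (hρ : ∀ f, ρ (D f) = D (ρ f)) :
    (∃ γ : k, γ ≠ 0 ∧ ρ g = C γ * g) ∧
    (∃ lam : k, lam ≠ 0 ∧ ∀ f, ρ (D₁ f) = C lam * D₁ (ρ f)) := by
  have hg0 : g ≠ 0 := by
    intro h; exact hg (by simp [h])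
  -- `a₁` and `b₁` are not both zero
  have hab0 : a₁ ≠ 0 ∨ b₁ ≠ 0 := by
    by_contra h
    push_neg at h
    have hu : IsUnit (X 0 : MvPolynomial (Fin 2) k) :=
      hirr (X 0) (h.1 ▸ dvd_zero _) (h.2 ▸ dvd_zero _)
    obtain ⟨c, hc⟩ := unit_eq_C 2 _ hu
    have := congrArg constantCoeff hc
    simp at this
    rw [hc, ← this] at hu
    simp at hu
  -- values of D₁ on the variables
  have hD₁x : D₁ (X 0) = a₁ := by
    rw [hD₁]
    simp [pderiv_X_self, pderiv_X_of_ne (show (0 : Fin 2) ≠ 1 by decide),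
      pderiv_X_of_ne (show (1 : Fin 2) ≠ 0 by decide)]
  have hD₁y : D₁ (X 1) = b₁ := by
    rw [hD₁]
    simp [pderiv_X_self, pderiv_X_of_ne (show (0 : Fin 2) ≠ 1 by decide),
      pderiv_X_of_ne (show (1 : Fin 2) ≠ 0 by decide)]
  -- key equation : ρ g * ρ (D₁ f) = g * D₁ (ρ f)
  have star : ∀ f, ρ g * ρ (D₁ f) = g * D₁ (ρ f) := by
    intro f
    have := hρ f
    rw [hD, hD, map_mul] at this
    exact this
  -- the inverse automorphism also commutes with D
  have star' : ∀ f, ρ.symm g * ρ.symm (D₁ f) = g * D₁ (ρ.symm f) := by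
    intro f
    have h1 := hρ (ρ.symm f)
    rw [AlgEquiv.apply_symm_apply] at h1
    have h2 := congrArg ρ.symm h1
    rw [AlgEquiv.symm_apply_apply] at h2
    rw [hD, hD, map_mul] at h2
    exact h2.symm
  have hprime : ∀ p : MvPolynomial (Fin 2) k, Prime p → p ∣ a₁ → p ∣ b₁ → False :=
    fun p hp h1 h2 => hp.not_unit (hirr p h1 h2)
  -- divisibility facts
  have hdvd : ∀ (σ : MvPolynomial (Fin 2) k ≃ₐ[k] MvPolynomial (Fin 2) k),
      (∀ f, σ g * σ (D₁ f) = g * D₁ (σ f)) → σ g ∣ g := by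
    intro σ hσ
    have e1 : σ g * σ (D₁ (σ.symm (X 0))) = g * a₁ := by
      rw [hσ, AlgEquiv.apply_symm_apply, hD₁x]
    have e2 : σ g * σ (D₁ (σ.symm (X 1))) = g * b₁ := by
      rw [hσ, AlgEquiv.apply_symm_apply, hD₁y]
    have d1 : σ g ∣ g * a₁ := ⟨_, e1.symm⟩
    have d2 : σ g ∣ g * b₁ := ⟨_, e2.symm⟩
    rcases hab0 with ha | hb
    · exact dvd_of_dvd_mul_coprime ha hprime (σ g) g d1 d2
    · exact dvd_of_dvd_mul_coprime hb (fun p hp h1 h2 => hprime p hp h2 h1) (σ g) g d2 d1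
  have h1 : ρ g ∣ g := hdvd ρ star
  have h2 : g ∣ ρ g := by
    have := hdvd ρ.symm star'
    have h3 := map_dvd (ρ : MvPolynomial (Fin 2) k →+* MvPolynomial (Fin 2) k) this
    simpa using h3
  obtain ⟨u, hu⟩ := associated_of_dvd_dvd h2 h1
  obtain ⟨γ, hγ⟩ := unit_eq_C 2 u.val u.isUnit
  have hρg : ρ g = C γ * g := by rw [← hu, hγ, mul_comm]
  have hγ0 : γ ≠ 0 := by
    intro h
    rw [h] at hρg
    simp at hρg
    exact hg0 (by simpa using ρ.injective (by simpa using hρg))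
  refine ⟨⟨γ, hγ0, hρg⟩, ⟨γ⁻¹, inv_ne_zero hγ0, ?_⟩⟩
  intro f
  have := star f
  rw [hρg] at this
  have hcγ : (C γ : MvPolynomial (Fin 2) k) ≠ 0 := by
    simpa using hγ0
  have key : C γ * ρ (D₁ f) = D₁ (ρ f) := by
    have h' : g * (C γ * ρ (D₁ f)) = g * D₁ (ρ f) := by ring_nf; ring_nf at this; linear_combination this
    exact mul_left_cancel₀ hg0 h'
  rw [← key, ← mul_assoc, ← map_mul, inv_mul_cancel₀ hγ0, map_one, one_mul]
end
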